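/- arXiv:1109.5845 — 8 statements merged into one kernel-verified Lean document; each statement's English description precedes it below -/
import Mathlib

section
/- Let X = (X_1,...,X_n) and Y = (Y_1,...,Y_n) be vectors of independent Bernoulli random variables with success probabilities p_1,...,p_n and q_1,...,q_n respectively, where 0 < p_i ≤ q_i < 1 for all i. Then for every k ∈ {0,1,...,n}, the conditional law of ∑X_i given ∑X_i ≥ k is stochastically dominated by the conditional law of ∑Y_i given ∑Y_i ≥ k. -/
open Finset
open scoped BigOperators Classical

noncomputable section

/-- Weight (probability) of a configuration `x` of `n` independent Bernoulli
variables with success probabilities `p i`. -/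
def bw {n : ℕ} (p : Fin n → ℝ) (x : Fin n → Bool) : ℝ :=
  ∏ i, if x i then p i else 1 - p i

/-- Probability of the event `A` for `n` independent Bernoulli variables. -/
def bpr {n : ℕ} (p : Fin n → ℝ) (A : (Fin n → Bool) → Prop) : ℝ :=
  ∑ x : Fin n → Bool, if A x then bw p x else 0

/-- Number of successes in the configuration `x`. -/
def cnt {n : ℕ} (x : Fin n → Bool) : ℕ := ∑ i, if x i then 1 else 0

/-- Conditional probability mass function given the event `A`. -/
def condPMF {n : ℕ} (p : Fin n → ℝ) (A : (Fin n → Bool) → Prop)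
    (x : Fin n → Bool) : ℝ :=
  (if A x then bw p x else 0) / bpr p A

/-- `dominates μ ν` : the law `μ` on `{0,1}^n` is stochastically dominated by `ν`,
i.e. there is a coupling supported on ordered pairs. -/
def dominates {n : ℕ} (μ ν : (Fin n → Bool) → ℝ) : Prop :=
  ∃ c : (Fin n → Bool) → (Fin n → Bool) → ℝ,
    (∀ x y, 0 ≤ c x y) ∧
    (∀ x, ∑ y : Fin n → Bool, c x y = μ x) ∧
    (∀ y, ∑ x : Fin n → Bool, c x y = ν y) ∧
    (∀ x y, c x y ≠ 0 → x ≤ y)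

/-! The law of `∑ X_i` is a point mass convolved, one variable at a time, with Bernoulli laws.
Each such convolution preserves log-concavity and the likelihood-ratio order `f ≤_lr g`
(`g / f` nondecreasing), and raising one success probability over a log-concave background
increases the law in that order; by induction `∑ X_i ≤_lr ∑ Y_i`. The likelihood-ratio order
survives conditioning on any event and implies domination of tails, which gives the claim. -/

def LikelihoodRatioLE {ι : Type*} [Preorder ι] (f g : ι → ℝ) : Prop :=
  ∀ ⦃a b⦄, a ≤ b → f b * g a ≤ f a * g b

namespace LikelihoodRatioLE

variable {ι : Type*} [Preorder ι] {f g h : ι → ℝ}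

theorem refl (f : ι → ℝ) : LikelihoodRatioLE f f := fun _ _ _ => (mul_comm _ _).le

theorem comp_monotone {κ : Type*} [Preorder κ] (hfg : LikelihoodRatioLE f g) {φ : κ → ι}
    (hφ : Monotone φ) : LikelihoodRatioLE (f ∘ φ) (g ∘ φ) :=
  fun _ _ hab => hfg (hφ hab)

theorem trans (hfg : LikelihoodRatioLE f g) (hgh : LikelihoodRatioLE g h)
    (hf : 0 ≤ f) (hg : 0 ≤ g) (hh : 0 ≤ h)
    (hfs : Function.support f ⊆ Function.support g)
    (hhs : Function.support h ⊆ Function.support g) : LikelihoodRatioLE f h := by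
  intro a b hab
  by_cases hga : g a = 0
  · have hfa : f a = 0 := Function.notMem_support.1 fun hfa => hfs hfa hga
    have hha : h a = 0 := Function.notMem_support.1 fun hha => hhs hha hga
    simp [hfa, hha]
  by_cases hgb : g b = 0
  · have hfb : f b = 0 := Function.notMem_support.1 fun hfb => hfs hfb hgb
    simpa [hfb] using mul_nonneg (hf a) (hh b)
  have hgab : 0 < g a * g b := mul_pos ((hg a).lt_of_ne' hga) ((hg b).lt_of_ne' hgb)
  refine le_of_mul_le_mul_right ?_ hgab
  calc f b * h a * (g a * g b) = (f b * g a) * (g b * h a) := by ring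
    _ ≤ (f a * g b) * (g a * h b) :=
        mul_le_mul (hfg hab) (hgh hab) (mul_nonneg (hg b) (hh a)) (mul_nonneg (hf a) (hg b))
    _ = f a * h b * (g a * g b) := by ring

end LikelihoodRatioLE

theorem sum_filter_div_sum_le_of_likelihoodRatioLE {ι : Type*} [LinearOrder ι] {f g : ι → ℝ}
    (hf : 0 ≤ f) (hg : 0 ≤ g) (hfg : LikelihoodRatioLE f g)
    (hs : Function.support f ⊆ Function.support g) {U : Set ι} [DecidablePred (· ∈ U)]
    (hU : IsUpperSet U) (V : Set ι) [DecidablePred (· ∈ V)] (s : Finset ι) :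
    (∑ i ∈ s with i ∈ U ∧ i ∈ V, f i) / ∑ i ∈ s with i ∈ V, f i
      ≤ (∑ i ∈ s with i ∈ U ∧ i ∈ V, g i) / ∑ i ∈ s with i ∈ V, g i := by
  have hsplit (φ : ι → ℝ) : ∑ i ∈ s with i ∈ V, φ i
      = ∑ i ∈ s with i ∈ U ∧ i ∈ V, φ i + ∑ i ∈ s with i ∉ U ∧ i ∈ V, φ i := by
    rw [← Finset.sum_filter_add_sum_filter_not (s.filter (· ∈ V)) (· ∈ U)]
    simp only [Finset.filter_filter, and_comm]
  have hcross : (∑ i ∈ s with i ∈ U ∧ i ∈ V, f i) * ∑ j ∈ s with j ∉ U ∧ j ∈ V, g j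
      ≤ (∑ i ∈ s with i ∈ U ∧ i ∈ V, g i) * ∑ j ∈ s with j ∉ U ∧ j ∈ V, f j := by
    rw [Finset.sum_mul_sum, Finset.sum_mul_sum]
    refine Finset.sum_le_sum fun i hi => Finset.sum_le_sum fun j hj => ?_
    have hji : j ≤ i := le_of_not_ge fun hij =>
      (Finset.mem_filter.1 hj).2.1 (hU hij (Finset.mem_filter.1 hi).2.1)
    linarith [hfg hji]
  rcases (Finset.sum_nonneg fun i _ => hf i : 0 ≤ ∑ i ∈ s with i ∈ V, f i).eq_or_lt
    with hf0 | hfpos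
  · rw [← hf0, div_zero]
    exact div_nonneg (Finset.sum_nonneg fun i _ => hg i) (Finset.sum_nonneg fun i _ => hg i)
  have hgpos : 0 < ∑ i ∈ s with i ∈ V, g i := by
    refine (Finset.sum_nonneg fun i _ => hg i).lt_of_ne fun hg0 => hfpos.ne' ?_
    refine Finset.sum_eq_zero fun i hi => Function.notMem_support.1 fun hfi => hs hfi ?_
    exact (Finset.sum_eq_zero_iff_of_nonneg fun i _ => hg i).1 hg0.symm i hi
  rw [div_le_div_iff₀ hfpos hgpos, hsplit f, hsplit g]
  linarith [hcross]

section BernoulliConv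

/-- The law of `S + B` for `B ∼ Bernoulli c` independent of `S ∼ f`. -/
def bernoulliConv (c : ℝ) (f : ℤ → ℝ) (j : ℤ) : ℝ := (1 - c) * f j + c * f (j - 1)

/-- `S ≤_lr S + 1`; for nonnegative `f` this is log-concavity with no internal zeros. -/
def IsLogConcaveSeq (f : ℤ → ℝ) : Prop := LikelihoodRatioLE f fun j => f (j - 1)

variable {f g : ℤ → ℝ} {c d : ℝ}

theorem LikelihoodRatioLE.bernoulliConv (hfg : LikelihoodRatioLE f g) (hc₀ : 0 ≤ c)
    (hc₁ : c ≤ 1) : LikelihoodRatioLE (bernoulliConv c f) (bernoulliConv c g) := by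
  intro a b hab
  rcases hab.eq_or_lt with rfl | hab
  · exact le_rfl
  have h₁ := hfg hab.le
  have h₂ := hfg (show a - 1 ≤ b - 1 by omega)
  have h₃ := hfg (show a ≤ b - 1 by omega)
  have h₄ := hfg (show a - 1 ≤ b by omega)
  have hc : 0 ≤ c * (1 - c) := mul_nonneg hc₀ (by linarith)
  simp only [_root_.bernoulliConv]
  nlinarith [mul_le_mul_of_nonneg_left h₁ (sq_nonneg (1 - c)),
    mul_le_mul_of_nonneg_left h₂ (sq_nonneg c), mul_le_mul_of_nonneg_left h₃ hc,
    mul_le_mul_of_nonneg_left h₄ hc]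

theorem IsLogConcaveSeq.likelihoodRatioLE_bernoulliConv (hf : IsLogConcaveSeq f)
    (hcd : c ≤ d) : LikelihoodRatioLE (bernoulliConv c f) (bernoulliConv d f) := by
  intro a b hab
  simp only [bernoulliConv]
  nlinarith [mul_le_mul_of_nonneg_left (hf hab) (sub_nonneg.2 hcd)]

/-- `bernoulliConv c` commutes with the shift. -/
theorem IsLogConcaveSeq.bernoulliConv (hf : IsLogConcaveSeq f) (hc₀ : 0 ≤ c) (hc₁ : c ≤ 1) :
    IsLogConcaveSeq (bernoulliConv c f) :=
  LikelihoodRatioLE.bernoulliConv hf hc₀ hc₁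

end BernoulliConv

section CountLaw

variable {n : ℕ}

/-- Indexed by `ℤ` so that the shift `j - 1` in `bernoulliConv` does not truncate. -/
def cntPMF (p : Fin n → ℝ) (j : ℤ) : ℝ := bpr p fun x => (cnt x : ℤ) = j

theorem cnt_le (x : Fin n → Bool) : cnt x ≤ n := by
  calc cnt x ≤ ∑ _i : Fin n, 1 := Finset.sum_le_sum fun i _ => by split <;> simp
    _ = n := by simp

theorem bw_nonneg {p : Fin n → ℝ} (hp : ∀ i, p i ∈ Set.Icc 0 1) (x : Fin n → Bool) :
    0 ≤ bw p x :=
  Finset.prod_nonneg fun i _ => by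
    split
    · exact (hp i).1
    · exact sub_nonneg.2 (hp i).2

theorem bw_cons (c : ℝ) (p : Fin n → ℝ) (b : Bool) (x : Fin n → Bool) :
    bw (Fin.cons c p) (Fin.cons b x) = (if b then c else 1 - c) * bw p x := by
  simp only [bw, Fin.prod_univ_succ, Fin.cons_zero, Fin.cons_succ]

theorem cnt_cons (b : Bool) (x : Fin n → Bool) :
    cnt (Fin.cons b x : Fin (n + 1) → Bool) = (if b then 1 else 0) + cnt x := by
  simp only [cnt, Fin.sum_univ_succ, Fin.cons_zero, Fin.cons_succ]

theorem sum_fin_succ_bool {M : Type*} [AddCommMonoid M] (F : (Fin (n + 1) → Bool) → M) :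
    ∑ x, F x = ∑ x : Fin n → Bool, (F (Fin.cons false x) + F (Fin.cons true x)) := by
  rw [← (Fin.consEquiv fun _ => Bool).sum_comp, Fintype.sum_prod_type_right]
  simp [Fin.consEquiv, add_comm]

theorem bpr_comp_cnt (p : Fin n → ℝ) (A : ℕ → Prop) [DecidablePred A] :
    bpr p (fun x => A (cnt x)) = ∑ j ∈ Finset.range (n + 1) with A j, cntPMF p j := by
  simp only [cntPMF, bpr]
  rw [Finset.sum_comm]
  refine Finset.sum_congr rfl fun x _ => ?_
  simp only [Nat.cast_inj, Finset.sum_ite_eq, Finset.mem_filter, Finset.mem_range,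
    Nat.lt_succ_of_le (cnt_le x), true_and]
  congr

theorem cntPMF_cons (c : ℝ) (p : Fin n → ℝ) :
    cntPMF (Fin.cons c p) = bernoulliConv c (cntPMF p) := by
  funext j
  simp only [cntPMF, bpr, bernoulliConv, sum_fin_succ_bool, bw_cons, cnt_cons, Finset.mul_sum,
    ← Finset.sum_add_distrib, Bool.false_eq_true, if_false, if_true, zero_add, Nat.cast_add,
    Nat.cast_one, add_comm (1 : ℤ), ← eq_sub_iff_add_eq, mul_ite, mul_zero]

theorem cntPMF_fin_zero (p : Fin 0 → ℝ) (j : ℤ) : cntPMF p j = if j = 0 then 1 else 0 := by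
  simp only [cntPMF, bpr, Fintype.sum_unique, cnt, bw, Finset.univ_eq_empty, Finset.sum_empty,
    Finset.prod_empty, Nat.cast_zero, eq_comm]

theorem cntPMF_nonneg {p : Fin n → ℝ} (hp : ∀ i, p i ∈ Set.Icc 0 1) : 0 ≤ cntPMF p :=
  fun _ => Finset.sum_nonneg fun x _ => by
    split
    · exact bw_nonneg hp x
    · exact le_rfl

theorem cntPMF_eq_zero (p : Fin n → ℝ) {j : ℤ} (hj : j ∉ Set.Icc 0 (n : ℤ)) :
    cntPMF p j = 0 := by
  refine Finset.sum_eq_zero fun x _ => if_neg ?_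
  rintro rfl
  exact hj ⟨Int.natCast_nonneg _, by exact_mod_cast cnt_le x⟩

theorem cntPMF_pos {p : Fin n → ℝ} (hp : ∀ i, p i ∈ Set.Ioo 0 1) {j : ℤ}
    (hj : j ∈ Set.Icc 0 (n : ℤ)) : 0 < cntPMF p j := by
  induction n generalizing j with
  | zero =>
    obtain rfl : j = 0 := le_antisymm (by exact_mod_cast hj.2) hj.1
    simp [cntPMF_fin_zero]
  | succ n ih =>
    obtain ⟨c, p, rfl⟩ := Fin.exists_cons p
    simp only [Fin.forall_fin_succ, Fin.cons_zero, Fin.cons_succ] at hp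
    obtain ⟨⟨hc₀, hc₁⟩, hp⟩ := hp
    have hP := cntPMF_nonneg fun i => Set.Ioo_subset_Icc_self (hp i)
    rw [cntPMF_cons, bernoulliConv]
    obtain ⟨hj₀, hjn⟩ := hj
    push_cast at hjn
    rcases (show j ≤ n ∨ j = n + 1 by omega) with hj | rfl
    · exact add_pos_of_pos_of_nonneg (mul_pos (by linarith) (ih hp ⟨hj₀, hj⟩))
        (mul_nonneg hc₀.le (hP _))
    · exact add_pos_of_nonneg_of_pos (mul_nonneg (by linarith) (hP _))
        (mul_pos hc₀ (ih hp ⟨by omega, by omega⟩))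

theorem support_cntPMF {p : Fin n → ℝ} (hp : ∀ i, p i ∈ Set.Ioo 0 1) :
    Function.support (cntPMF p) = Set.Icc 0 (n : ℤ) :=
  Set.Subset.antisymm (fun _ hj => by_contra fun h => hj (cntPMF_eq_zero p h))
    fun _ hj => (cntPMF_pos hp hj).ne'

theorem isLogConcaveSeq_cntPMF {p : Fin n → ℝ} (hp : ∀ i, p i ∈ Set.Icc 0 1) :
    IsLogConcaveSeq (cntPMF p) := by
  induction n with
  | zero =>
    intro a b hab
    simp only [cntPMF_fin_zero]
    split_ifs <;> first | omega | norm_num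
  | succ n ih =>
    obtain ⟨c, p, rfl⟩ := Fin.exists_cons p
    simp only [Fin.forall_fin_succ, Fin.cons_zero, Fin.cons_succ] at hp
    rw [cntPMF_cons]
    exact (ih hp.2).bernoulliConv hp.1.1 hp.1.2

theorem likelihoodRatioLE_cntPMF {p q : Fin n → ℝ} (hp : ∀ i, p i ∈ Set.Ioo 0 1)
    (hq : ∀ i, q i ∈ Set.Ioo 0 1) (hpq : p ≤ q) :
    LikelihoodRatioLE (cntPMF p) (cntPMF q) := by
  induction n with
  | zero => exact Subsingleton.elim p q ▸ LikelihoodRatioLE.refl _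
  | succ n ih =>
    obtain ⟨c, p, rfl⟩ := Fin.exists_cons p
    obtain ⟨d, q, rfl⟩ := Fin.exists_cons q
    have hp' : ∀ i, p i ∈ Set.Ioo 0 1 := fun i => by simpa using hp i.succ
    have hq' : ∀ i, q i ∈ Set.Ioo 0 1 := fun i => by simpa using hq i.succ
    have hd : d ∈ Set.Ioo 0 1 := by simpa using hq 0
    have hmid : ∀ i, (Fin.cons d p : Fin (n + 1) → ℝ) i ∈ Set.Ioo 0 1 :=
      Fin.forall_fin_succ.2 ⟨hd, hp'⟩
    obtain ⟨hcd, hpq'⟩ := Fin.cons_le_cons.1 hpq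
    have hraise : LikelihoodRatioLE (cntPMF (Fin.cons c p)) (cntPMF (Fin.cons d p)) := by
      rw [cntPMF_cons, cntPMF_cons]
      exact (isLogConcaveSeq_cntPMF fun i => Set.Ioo_subset_Icc_self (hp' i))
        |>.likelihoodRatioLE_bernoulliConv hcd
    have htail : LikelihoodRatioLE (cntPMF (Fin.cons d p)) (cntPMF (Fin.cons d q)) := by
      rw [cntPMF_cons, cntPMF_cons]
      exact (ih hp' hq' hpq').bernoulliConv hd.1.le hd.2.le
    refine hraise.trans htail (cntPMF_nonneg fun i => Set.Ioo_subset_Icc_self (hp i))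
      (cntPMF_nonneg fun i => Set.Ioo_subset_Icc_self (hmid i))
      (cntPMF_nonneg fun i => Set.Ioo_subset_Icc_self (hq i)) ?_ ?_
    · rw [support_cntPMF hp, support_cntPMF hmid]
    · rw [support_cntPMF hq, support_cntPMF hmid]

end CountLaw

theorem stmt0_general {n : ℕ} (p q : Fin n → ℝ)
    (hpq : ∀ i, 0 < p i ∧ p i ≤ q i ∧ q i < 1) (k : ℕ) :
    ∀ t : ℝ,
      bpr p (fun x => t ≤ (cnt x : ℝ) ∧ k ≤ cnt x) / bpr p (fun x => k ≤ cnt x)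
        ≤ bpr q (fun x => t ≤ (cnt x : ℝ) ∧ k ≤ cnt x) / bpr q (fun x => k ≤ cnt x) := by
  intro t
  have hp : ∀ i, p i ∈ Set.Ioo 0 1 := fun i => ⟨(hpq i).1, (hpq i).2.1.trans_lt (hpq i).2.2⟩
  have hq : ∀ i, q i ∈ Set.Ioo 0 1 := fun i => ⟨(hpq i).1.trans_le (hpq i).2.1, (hpq i).2.2⟩
  have hlr : LikelihoodRatioLE (cntPMF p ∘ Nat.cast) (cntPMF q ∘ Nat.cast) :=
    (likelihoodRatioLE_cntPMF hp hq fun i => (hpq i).2.1).comp_monotone Nat.mono_cast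
  have hsupp :
      Function.support (cntPMF p ∘ Nat.cast) ⊆ Function.support (cntPMF q ∘ Nat.cast) := by
    rw [Function.support_comp_eq_preimage, Function.support_comp_eq_preimage, support_cntPMF hp,
      support_cntPMF hq]
  rw [bpr_comp_cnt p fun j => t ≤ (j : ℝ) ∧ k ≤ j, bpr_comp_cnt p fun j => k ≤ j,
    bpr_comp_cnt q fun j => t ≤ (j : ℝ) ∧ k ≤ j, bpr_comp_cnt q fun j => k ≤ j]
  exact sum_filter_div_sum_le_of_likelihoodRatioLE
    (f := cntPMF p ∘ Nat.cast) (g := cntPMF q ∘ Nat.cast) (U := {j : ℕ | t ≤ j}) (V := {j | k ≤ j})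
    (fun j => cntPMF_nonneg (fun i => Set.Ioo_subset_Icc_self (hp i)) j)
    (fun j => cntPMF_nonneg (fun i => Set.Ioo_subset_Icc_self (hq i)) j) hlr hsupp
    (fun _ _ hab (ha : t ≤ _) => ha.trans (Nat.cast_le.2 hab)) _

/-- the conditional law of `∑ X_i` given `∑ X_i ≥ k` is stochastically
dominated by the conditional law of `∑ Y_i` given `∑ Y_i ≥ k`, in the sense that
`P(∑X ≥ t | ∑X ≥ k) ≤ P(∑Y ≥ t | ∑Y ≥ k)` for every real `t`. -/
theorem stmt0 {n : ℕ} (p q : Fin n → ℝ)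
    (hpq : ∀ i, 0 < p i ∧ p i ≤ q i ∧ q i < 1) (k : ℕ) (hk : k ≤ n) :
    ∀ t : ℝ,
      bpr p (fun x => t ≤ (cnt x : ℝ) ∧ k ≤ cnt x) / bpr p (fun x => k ≤ cnt x)
        ≤ bpr q (fun x => t ≤ (cnt x : ℝ) ∧ k ≤ cnt x) / bpr q (fun x => k ≤ cnt x) :=
  stmt0_general p q hpq k
end
end

section
/- Let X_1,...,X_n be independent Bernoulli random variables with success probabilities p_1,...,p_n ∈ (0,1). For k ∈ {0,...,n-1}, the quotient Q^n_k = P(∑X_i = k+1)/P(∑X_i = k) is strictly increasing in each p_j (for fixed k) and strictly decreasing in k (for fixed p_1,...,p_n). -/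
open Finset
open scoped BigOperators Classical

noncomputable section

/-!
Write `N_s(m)` for the probability that exactly `m` of the variables indexed by `s` succeed.
Conditioning on `X_j` gives `N_{s ∪ {j}}(m + 1) = p_j N_s(m) + (1 - p_j) N_s(m + 1)`, and an
induction on `s` along this recurrence shows that `N_s` is strictly log-concave:
`N_s(k) N_s(k + 2) < N_s(k + 1)²` for `k < |s|`. This is exactly the decrease of the quotient in
`k`. In `p_j` the quotient is `(p_j b + (1 - p_j) c) / (p_j a + (1 - p_j) b)` with `a, b, c`
consecutive values of `N` on the other indices, and the cross-difference of two such fractions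
is `(p'_j - p_j)(b² - ac)`, positive by log-concavity.
-/

section PoissonBinomial

variable {ι : Type*} [DecidableEq ι]

def poissonBinomial (p : ι → ℝ) (s : Finset ι) (m : ℕ) : ℝ :=
  ∑ A ∈ s.powersetCard m, (∏ i ∈ A, p i) * ∏ i ∈ s \ A, (1 - p i)

lemma poissonBinomial_congr {p q : ι → ℝ} {s : Finset ι} (h : ∀ i ∈ s, p i = q i) (m : ℕ) :
    poissonBinomial p s m = poissonBinomial q s m := by
  refine sum_congr rfl fun A hA => ?_
  have hAs : A ⊆ s := (mem_powersetCard.mp hA).1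
  rw [prod_congr rfl fun i hi => h i (hAs hi),
    prod_congr rfl fun i hi => congrArg (1 - ·) (h i (sdiff_subset hi))]

lemma poissonBinomial_eq_zero_of_card_lt (p : ι → ℝ) {s : Finset ι} {m : ℕ} (h : #s < m) :
    poissonBinomial p s m = 0 := by
  rw [poissonBinomial, powersetCard_eq_empty.mpr h, sum_empty]

lemma poissonBinomial_nonneg {p : ι → ℝ} (hp : ∀ i, p i ∈ Set.Icc 0 1) (s : Finset ι) (m : ℕ) :
    0 ≤ poissonBinomial p s m :=
  sum_nonneg fun _ _ => mul_nonneg (prod_nonneg fun i _ => (hp i).1)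
    (prod_nonneg fun i _ => sub_nonneg.mpr (hp i).2)

lemma poissonBinomial_pos {p : ι → ℝ} (hp : ∀ i, p i ∈ Set.Ioo 0 1) {s : Finset ι} {m : ℕ}
    (hm : m ≤ #s) : 0 < poissonBinomial p s m := by
  obtain ⟨A, hAs, hAm⟩ := exists_subset_card_eq hm
  exact sum_pos' (fun _ _ => mul_nonneg (prod_nonneg fun i _ => (hp i).1.le)
      (prod_nonneg fun i _ => sub_nonneg.mpr (hp i).2.le))
    ⟨A, mem_powersetCard.mpr ⟨hAs, hAm⟩, mul_pos (prod_pos fun i _ => (hp i).1)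
      (prod_pos fun i _ => sub_pos.mpr (hp i).2)⟩

lemma poissonBinomial_insert_zero (p : ι → ℝ) {j : ι} {s : Finset ι} (hj : j ∉ s) :
    poissonBinomial p (insert j s) 0 = (1 - p j) * poissonBinomial p s 0 := by
  simp [poissonBinomial, prod_insert hj]

lemma poissonBinomial_insert_succ (p : ι → ℝ) {j : ι} {s : Finset ι} (hj : j ∉ s) (m : ℕ) :
    poissonBinomial p (insert j s) (m + 1) =
      p j * poissonBinomial p s m + (1 - p j) * poissonBinomial p s (m + 1) := by
  have hjA : ∀ A ∈ s.powersetCard m, j ∉ A := fun A hA hjA =>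
    hj ((mem_powersetCard.mp hA).1 hjA)
  have hdisj : Disjoint (s.powersetCard (m + 1)) ((s.powersetCard m).image (insert j)) := by
    refine disjoint_right.mpr fun A hA hA' => ?_
    obtain ⟨B, -, rfl⟩ := mem_image.mp hA
    exact hj ((mem_powersetCard.mp hA').1 (mem_insert_self j B))
  have hinj : Set.InjOn (insert j : Finset ι → Finset ι) (s.powersetCard m) :=
    fun A hA B hB hAB => by
      rw [← erase_insert (hjA A hA), hAB, erase_insert (hjA B hB)]
  rw [poissonBinomial, powersetCard_succ_insert hj, sum_union hdisj, sum_image hinj, add_comm,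
    poissonBinomial, poissonBinomial, mul_sum, mul_sum]
  congr 1
  · refine sum_congr rfl fun A hA => ?_
    rw [insert_sdiff_insert, sdiff_insert_of_notMem hj, prod_insert (hjA A hA)]
    ring
  · refine sum_congr rfl fun A hA => ?_
    rw [insert_sdiff_of_notMem _ fun h => hj ((mem_powersetCard.mp hA).1 h),
      prod_insert fun h => hj (mem_sdiff.mp h).1]
    ring

lemma mix_mul_mix_lt_sq {q a₀ a₁ a₂ a₃ : ℝ} (hq : q ∈ Set.Ioo 0 1) (h₀₂ : a₀ * a₂ < a₁ ^ 2)
    (h₀₃ : a₀ * a₃ ≤ a₁ * a₂) (h₁₃ : a₁ * a₃ ≤ a₂ ^ 2) :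
    (q * a₀ + (1 - q) * a₁) * (q * a₂ + (1 - q) * a₃) < (q * a₁ + (1 - q) * a₂) ^ 2 := by
  obtain ⟨hq₀, hq₁⟩ := hq
  have hq₁' : 0 < 1 - q := sub_pos.mpr hq₁
  have h₁ : 0 < q ^ 2 * (a₁ ^ 2 - a₀ * a₂) := by have := sub_pos.mpr h₀₂; positivity
  have h₂ : 0 ≤ q * (1 - q) * (a₁ * a₂ - a₀ * a₃) := by have := sub_nonneg.mpr h₀₃; positivity
  have h₃ : 0 ≤ (1 - q) ^ 2 * (a₂ ^ 2 - a₁ * a₃) := by have := sub_nonneg.mpr h₁₃; positivity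
  linear_combination h₁ + h₂ + h₃

lemma mix_div_mix_lt_mix_div_mix {q q' a b c : ℝ} (hqq' : q < q') (h : a * c < b ^ 2)
    (hd : 0 < q * a + (1 - q) * b) (hd' : 0 < q' * a + (1 - q') * b) :
    (q * b + (1 - q) * c) / (q * a + (1 - q) * b)
      < (q' * b + (1 - q') * c) / (q' * a + (1 - q') * b) := by
  rw [div_lt_div_iff₀ hd hd']
  linear_combination mul_pos (sub_pos.mpr hqq') (sub_pos.mpr h)

variable {p : ι → ℝ} {s : Finset ι}

lemma poissonBinomial_mul_le_sq_of_mul_lt_sq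
    (h : ∀ k, k + 1 ≤ #s → poissonBinomial p s k * poissonBinomial p s (k + 2)
      < poissonBinomial p s (k + 1) ^ 2) (k : ℕ) :
    poissonBinomial p s k * poissonBinomial p s (k + 2) ≤ poissonBinomial p s (k + 1) ^ 2 := by
  by_cases hk : k + 1 ≤ #s
  · exact (h k hk).le
  · rw [poissonBinomial_eq_zero_of_card_lt p (by omega : #s < k + 2), mul_zero]
    positivity

lemma poissonBinomial_mul_le_mul (hp : ∀ i, p i ∈ Set.Ioo 0 1)
    (hlc : ∀ k, poissonBinomial p s k * poissonBinomial p s (k + 2)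
      ≤ poissonBinomial p s (k + 1) ^ 2) (r : ℕ) :
    poissonBinomial p s r * poissonBinomial p s (r + 3)
      ≤ poissonBinomial p s (r + 1) * poissonBinomial p s (r + 2) := by
  have hnonneg := poissonBinomial_nonneg (fun i => Set.Ioo_subset_Icc_self (hp i)) s
  by_cases hr : r + 3 ≤ #s
  · have h₁ := poissonBinomial_pos hp (by omega : r + 1 ≤ #s)
    have h₂ := poissonBinomial_pos hp (by omega : r + 2 ≤ #s)
    refine le_of_mul_le_mul_right ?_ (mul_pos h₁ h₂)
    nlinarith [mul_le_mul (hlc r) (hlc (r + 1)) (mul_nonneg (hnonneg _) (hnonneg _))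
      (sq_nonneg _)]
  · rw [poissonBinomial_eq_zero_of_card_lt p (by omega : #s < r + 3), mul_zero]
    exact mul_nonneg (hnonneg _) (hnonneg _)

lemma poissonBinomial_insert_mul_lt_sq (hp : ∀ i, p i ∈ Set.Ioo 0 1) {j : ι} (hj : j ∉ s)
    (ih : ∀ k, k + 1 ≤ #s → poissonBinomial p s k * poissonBinomial p s (k + 2)
      < poissonBinomial p s (k + 1) ^ 2) {k : ℕ} (hk : k + 1 ≤ #s + 1) :
    poissonBinomial p (insert j s) k * poissonBinomial p (insert j s) (k + 2)
      < poissonBinomial p (insert j s) (k + 1) ^ 2 := by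
  have hlc := poissonBinomial_mul_le_sq_of_mul_lt_sq ih
  cases k with
  | zero =>
    have h₀ := poissonBinomial_pos hp (Nat.zero_le #s)
    have h₁ := poissonBinomial_nonneg (fun i => Set.Ioo_subset_Icc_self (hp i)) s 1
    rw [poissonBinomial_insert_zero p hj, poissonBinomial_insert_succ p hj,
      poissonBinomial_insert_succ p hj]
    -- the general step, read with the value `0` of `poissonBinomial p s (-1)`
    simpa only [mul_zero, zero_add] using mix_mul_mix_lt_sq (hp j) (a₀ := 0)
      (by rw [zero_mul]; positivity) (by rw [zero_mul]; positivity) (hlc 0)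
  | succ r =>
    rw [poissonBinomial_insert_succ p hj, poissonBinomial_insert_succ p hj,
      poissonBinomial_insert_succ p hj]
    exact mix_mul_mix_lt_sq (hp j) (ih r (by omega)) (poissonBinomial_mul_le_mul hp hlc r)
      (hlc (r + 1))

lemma poissonBinomial_mul_lt_sq (hp : ∀ i, p i ∈ Set.Ioo 0 1) (s : Finset ι) {k : ℕ}
    (hk : k + 1 ≤ #s) :
    poissonBinomial p s k * poissonBinomial p s (k + 2) < poissonBinomial p s (k + 1) ^ 2 := by
  induction s using Finset.induction_on generalizing k with
  | empty => simp at hk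
  | insert j s hj ih =>
    rw [card_insert_of_notMem hj] at hk
    exact poissonBinomial_insert_mul_lt_sq hp hj (fun k => ih) hk

lemma poissonBinomial_insert_div_lt_of_lt {p' : ι → ℝ} (hp : ∀ i, p i ∈ Set.Ioo 0 1) {j : ι}
    (hj : j ∉ s) (hp's : ∀ i ∈ s, p' i = p i) (hlt : p j < p' j) (hp'j : p' j < 1) {k : ℕ}
    (hk : k ≤ #s) :
    poissonBinomial p (insert j s) (k + 1) / poissonBinomial p (insert j s) k
      < poissonBinomial p' (insert j s) (k + 1) / poissonBinomial p' (insert j s) k := by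
  have hq₀ : 0 < p j := (hp j).1
  have hq₁ : 0 < 1 - p j := sub_pos.mpr (hp j).2
  have hq'₀ : 0 < p' j := hq₀.trans hlt
  have hq'₁ : 0 < 1 - p' j := sub_pos.mpr hp'j
  cases k with
  | zero =>
    have h₀ := poissonBinomial_pos hp (Nat.zero_le #s)
    rw [poissonBinomial_insert_succ p hj, poissonBinomial_insert_succ p' hj,
      poissonBinomial_insert_zero p hj, poissonBinomial_insert_zero p' hj,
      poissonBinomial_congr hp's, poissonBinomial_congr hp's]
    simpa only [mul_zero, zero_add] using mix_div_mix_lt_mix_div_mix hlt (a := 0)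
      (b := poissonBinomial p s 0) (c := poissonBinomial p s 1)
      (by rw [zero_mul]; positivity) (by positivity) (by positivity)
  | succ r =>
    have hr := poissonBinomial_pos hp (by omega : r ≤ #s)
    have hr₁ := poissonBinomial_pos hp hk
    rw [poissonBinomial_insert_succ p hj, poissonBinomial_insert_succ p' hj,
      poissonBinomial_insert_succ p hj, poissonBinomial_insert_succ p' hj,
      poissonBinomial_congr hp's, poissonBinomial_congr hp's, poissonBinomial_congr hp's]
    exact mix_div_mix_lt_mix_div_mix hlt
      (by linear_combination poissonBinomial_mul_lt_sq hp s hk) (by positivity) (by positivity)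

lemma poissonBinomial_succ_div_lt_div (hp : ∀ i, p i ∈ Set.Ioo 0 1) {k : ℕ} (hk : k + 1 ≤ #s) :
    poissonBinomial p s (k + 2) / poissonBinomial p s (k + 1)
      < poissonBinomial p s (k + 1) / poissonBinomial p s k := by
  rw [div_lt_div_iff₀ (poissonBinomial_pos hp hk) (poissonBinomial_pos hp (by omega))]
  linear_combination poissonBinomial_mul_lt_sq hp s hk

end PoissonBinomial

lemma cnt_eq_card_filter {n : ℕ} (x : Fin n → Bool) : cnt x = #{i | x i} := by
  rw [cnt, card_filter]

lemma bpr_cnt_eq_poissonBinomial {n : ℕ} (p : Fin n → ℝ) (m : ℕ) :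
    bpr p (fun x => cnt x = m) = poissonBinomial p univ m := by
  trans ∑ x with cnt x = m, bw p x
  · -- `bpr` decides its event classically, `sum_filter` with the instance of `ℕ`.
    rw [bpr, sum_filter]
    congr!
  rw [poissonBinomial]
  refine sum_nbij' (fun x => ({i | x i} : Finset (Fin n))) (fun A i => decide (i ∈ A))
    ?_ ?_ ?_ ?_ ?_
  · intro x hx
    simpa [cnt_eq_card_filter] using hx
  · intro A hA
    simp_all [cnt_eq_card_filter]
  · intro x _
    funext i
    simp
  · intro A _
    ext i
    simp
  · intro x _
    rw [bw, prod_ite, filter_not]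

/-- the quotient `Q^n_k = P(∑X = k+1)/P(∑X = k)` is strictly increasing
in each `p j` (for fixed `k`) and strictly decreasing in `k`. -/
theorem stmt1 {n : ℕ} (p : Fin n → ℝ) (hp : ∀ i, 0 < p i ∧ p i < 1) :
    (∀ (k : ℕ), k ≤ n - 1 →
      ∀ (j : Fin n) (p' : Fin n → ℝ), (∀ i, 0 < p' i ∧ p' i < 1) →
        (∀ i, i ≠ j → p' i = p i) → p j < p' j →
        bpr p (fun x => cnt x = k + 1) / bpr p (fun x => cnt x = k)
          < bpr p' (fun x => cnt x = k + 1) / bpr p' (fun x => cnt x = k)) ∧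
    (∀ (k : ℕ), k + 1 ≤ n - 1 →
      bpr p (fun x => cnt x = k + 2) / bpr p (fun x => cnt x = k + 1)
        < bpr p (fun x => cnt x = k + 1) / bpr p (fun x => cnt x = k)) := by
  simp only [bpr_cnt_eq_poissonBinomial]
  refine ⟨fun k hk j p' hp' hp'p hlt => ?_, fun k hk => ?_⟩
  · rw [← insert_erase (mem_univ j)]
    exact poissonBinomial_insert_div_lt_of_lt hp (notMem_erase j univ)
      (fun i hi => hp'p i (ne_of_mem_erase hi)) hlt (hp' j).2
      (by rwa [card_erase_of_mem (mem_univ j), card_univ, Fintype.card_fin])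
  · exact poissonBinomial_succ_div_lt_div hp (by rw [card_univ, Fintype.card_fin]; omega)
end
end

section
/- Let X = (X_1,...,X_n) and Y = (Y_1,...,Y_n) be vectors of independent Bernoulli random variables with success probabilities p_i and q_i respectively, 0 < p_i ≤ q_i < 1, and set β_i = (p_i/(1-p_i))·((1-q_i)/q_i). Then the following are equivalent: (i) all β_i are equal; (ii) for every k ∈ {0,...,n}, the conditional law of X given ∑X_i = k equals the conditional law of Y given ∑Y_i = k; (iii) the conditional law of X given ∑X_i = k equals the conditional law of Y given ∑Y_i = k for some k ∈ {1,...,n-1}. -/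
open Finset
open scoped BigOperators Classical

noncomputable section

/-! If `β i = c` for all `i`, then `bw p x = C · c ^ cnt x · bw q x` with
`C = ∏ (1 - p i) / (1 - q i)`, so on each level set `{cnt = k}` the two weights are proportional
and the conditional laws agree. Conversely, if the conditional laws agree on `{cnt = k}` with
`0 < k < n`, compare a configuration `x` with `x i = true`, `x j = false` to the configuration
obtained by moving the success from `i` to `j`: the ratio `bw p / bw q` is the same at both, and it
changes by the factor `β j / β i`. -/

open Function

section Update

variable {ι α M : Type*} [Fintype ι] [DecidableEq ι]

@[to_additive]
lemma prod_apply_update_mul [CommMonoid M] (f : ι → α → M) (x : ι → α) (i : ι) (b : α) :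
    (∏ l, f l (update x i b l)) * f i (x i) = (∏ l, f l (x l)) * f i b := by
  have hcompl : ∏ l ∈ {i}ᶜ, f l (update x i b l) = ∏ l ∈ {i}ᶜ, f l (x l) :=
    prod_congr rfl fun l hl => by rw [update_of_ne (by simpa using hl)]
  rw [Fintype.prod_eq_prod_compl_mul i, Fintype.prod_eq_prod_compl_mul i (fun l => f l (x l)),
    hcompl, update_self, mul_right_comm]

end Update

/-- The odds ratio `β i` of the paper. -/
def oddsRatio {n : ℕ} (p q : Fin n → ℝ) (i : Fin n) : ℝ :=
  p i / (1 - p i) * ((1 - q i) / q i)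

variable {n : ℕ}

lemma bw_update_mul (p : Fin n → ℝ) (x : Fin n → Bool) (i : Fin n) (b : Bool) :
    bw p (update x i b) * (if x i then p i else 1 - p i) =
      bw p x * (if b then p i else 1 - p i) :=
  prod_apply_update_mul (fun l b => if b then p l else 1 - p l) x i b

lemma cnt_update_add (x : Fin n → Bool) (i : Fin n) (b : Bool) :
    cnt (update x i b) + (if x i then 1 else 0) = cnt x + (if b then 1 else 0) :=
  sum_apply_update_add (fun _ b => if b then 1 else 0) x i b

section Transfer

variable {x : Fin n → Bool} {i j : Fin n}

lemma cnt_transfer (hij : i ≠ j) (hi : x i = true) (hj : x j = false) :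
    cnt (update (update x i false) j true) = cnt x := by
  have h₁ := cnt_update_add x i false
  have h₂ := cnt_update_add (update x i false) j true
  rw [update_of_ne hij.symm, hj] at h₂
  simp only [hi, Bool.false_eq_true, if_false, if_true] at h₁ h₂
  omega

lemma bw_transfer (p : Fin n → ℝ) (hij : i ≠ j) (hi : x i = true) (hj : x j = false) :
    bw p (update (update x i false) j true) * (p i * (1 - p j)) =
      bw p x * ((1 - p i) * p j) := by
  have h₁ := bw_update_mul p x i false
  have h₂ := bw_update_mul p (update x i false) j true
  rw [update_of_ne hij.symm, hj] at h₂
  simp only [hi, Bool.false_eq_true, if_false, if_true] at h₁ h₂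
  linear_combination p i * h₂ + p j * h₁

end Transfer

lemma cnt_indicator (S : Finset (Fin n)) : cnt (fun i => decide (i ∈ S)) = #S := by
  simp [cnt, sum_ite_mem]

lemma exists_cnt_eq {k : ℕ} (hk : k ≤ n) : ∃ x : Fin n → Bool, cnt x = k := by
  obtain ⟨S, -, hS⟩ := exists_subset_card_eq (s := (univ : Finset (Fin n))) (by simpa using hk)
  exact ⟨_, (cnt_indicator S).trans hS⟩

lemma exists_cnt_eq_of_ne {k : ℕ} {i j : Fin n} (hij : i ≠ j) (hk₀ : 1 ≤ k) (hk : k < n) :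
    ∃ x : Fin n → Bool, cnt x = k ∧ x i = true ∧ x j = false := by
  have hsub : {i} ⊆ univ.erase j := by simpa using hij
  obtain ⟨S, hiS, hSj, hS⟩ := exists_subsuperset_card_eq hsub (by simpa using hk₀)
    (by rw [card_erase_of_mem (mem_univ j), card_univ, Fintype.card_fin]; omega)
  refine ⟨fun l => decide (l ∈ S), (cnt_indicator S).trans hS, ?_, ?_⟩
  · simpa using hiS (mem_singleton_self i)
  · simpa using fun h => (mem_erase.1 (hSj h)).1 rfl

section Positivity

variable {p : Fin n → ℝ} (hp : ∀ i, 0 < p i ∧ p i < 1)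
include hp

lemma bw_pos (x : Fin n → Bool) : 0 < bw p x :=
  prod_pos fun i _ => by
    split
    · exact (hp i).1
    · linarith [(hp i).2]

lemma bpr_cnt_pos {k : ℕ} (hk : k ≤ n) : 0 < bpr p (fun y => cnt y = k) := by
  obtain ⟨x, hx⟩ := exists_cnt_eq hk
  refine sum_pos' (fun y _ => ?_) ⟨x, mem_univ x, by simpa [hx] using bw_pos hp x⟩
  split
  · exact (bw_pos hp y).le
  · exact le_rfl

end Positivity

section Conditional

variable {p q : Fin n → ℝ} {A : (Fin n → Bool) → Prop}

lemma condPMF_eq_of_bw_eq_mul {D : ℝ} (hD : D ≠ 0) (h : ∀ x, A x → bw p x = D * bw q x)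
    (x : Fin n → Bool) : condPMF p A x = condPMF q A x := by
  have hbpr : bpr p A = D * bpr q A := by
    rw [bpr, bpr, mul_sum]
    refine sum_congr rfl fun y _ => ?_
    split_ifs with hy
    · exact h y hy
    · rw [mul_zero]
  unfold condPMF
  split_ifs with hx
  · rw [h x hx, hbpr, mul_div_mul_left _ _ hD]
  · rw [zero_div, zero_div]

lemma bw_mul_bw_eq_of_condPMF_eq (hpA : bpr p A ≠ 0) (hqA : bpr q A ≠ 0)
    (h : ∀ z, condPMF p A z = condPMF q A z) {x y : Fin n → Bool} (hx : A x) (hy : A y) :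
    bw p x * bw q y = bw q x * bw p y := by
  have ex := h x
  have ey := h y
  simp only [condPMF, if_pos hx, if_pos hy] at ex ey
  rw [div_eq_div_iff hpA hqA] at ex ey
  refine mul_right_cancel₀ (mul_ne_zero hqA hpA) ?_
  linear_combination (bw q y * bpr p A) * ex - (bw q x * bpr p A) * ey

end Conditional

section OddsRatio

variable {p q : Fin n → ℝ}

lemma bw_eq_mul_prod_oddsRatio (hp : ∀ i, p i ≠ 1) (hq : ∀ i, q i ≠ 0 ∧ q i ≠ 1)
    (x : Fin n → Bool) :
    bw p x =
      (∏ i, (1 - p i) / (1 - q i)) * (∏ i, if x i then oddsRatio p q i else 1) * bw q x := by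
  rw [bw, bw, ← prod_mul_distrib, ← prod_mul_distrib]
  refine prod_congr rfl fun i _ => ?_
  have hp₁ : 1 - p i ≠ 0 := sub_ne_zero.2 (hp i).symm
  have hq₀ := (hq i).1
  have hq₁ : 1 - q i ≠ 0 := sub_ne_zero.2 (hq i).2.symm
  split_ifs
  · rw [oddsRatio]
    field_simp
  · field_simp

lemma prod_ite_const_eq_pow_cnt (c : ℝ) (x : Fin n → Bool) :
    ∏ i, (if x i then c else 1) = c ^ cnt x := by
  rw [cnt, ← prod_pow_eq_pow_sum]
  exact prod_congr rfl fun i _ => by split_ifs <;> simp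

variable (hp : ∀ i, 0 < p i ∧ p i < 1) (hq : ∀ i, 0 < q i ∧ q i < 1)
include hp hq

lemma oddsRatio_pos (i : Fin n) : 0 < oddsRatio p q i := by
  have := hp i
  have := hq i
  unfold oddsRatio
  apply mul_pos <;> apply div_pos <;> linarith

lemma condPMF_cnt_eq_of_oddsRatio_eq {c : ℝ} (hc : ∀ i, oddsRatio p q i = c) (hc₀ : c ≠ 0)
    (k : ℕ) (x : Fin n → Bool) :
    condPMF p (fun y => cnt y = k) x = condPMF q (fun y => cnt y = k) x := by
  have hC : ∏ i, (1 - p i) / (1 - q i) ≠ 0 :=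
    prod_ne_zero_iff.2 fun i _ => div_ne_zero (by linarith [(hp i).2]) (by linarith [(hq i).2])
  refine condPMF_eq_of_bw_eq_mul (mul_ne_zero hC (pow_ne_zero k hc₀)) (fun y hy => ?_) x
  rw [bw_eq_mul_prod_oddsRatio (fun i => (hp i).2.ne) (fun i => ⟨(hq i).1.ne', (hq i).2.ne⟩) y]
  simp only [hc, prod_ite_const_eq_pow_cnt, hy]

lemma oddsRatio_eq_of_condPMF_cnt_eq {k : ℕ} (hk₀ : 1 ≤ k) (hk : k < n)
    (h : ∀ x, condPMF p (fun y => cnt y = k) x = condPMF q (fun y => cnt y = k) x)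
    (i j : Fin n) : oddsRatio p q i = oddsRatio p q j := by
  rcases eq_or_ne i j with rfl | hij
  · rfl
  obtain ⟨x, hx, hxi, hxj⟩ := exists_cnt_eq_of_ne hij hk₀ hk
  set y := update (update x i false) j true
  have hy : cnt y = k := (cnt_transfer hij hxi hxj).trans hx
  have hxy := bw_mul_bw_eq_of_condPMF_eq (bpr_cnt_pos hp hk.le).ne' (bpr_cnt_pos hq hk.le).ne'
    h hx hy
  have htp : bw p y * (p i * (1 - p j)) = bw p x * ((1 - p i) * p j) := bw_transfer p hij hxi hxj
  have htq : bw q y * (q i * (1 - q j)) = bw q x * ((1 - q i) * q j) := bw_transfer q hij hxi hxj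
  have hcross : p i * (1 - p j) * ((1 - q i) * q j) = (1 - p i) * p j * (q i * (1 - q j)) := by
    refine mul_left_cancel₀ (mul_pos (bw_pos hp y) (bw_pos hq x)).ne' ?_
    linear_combination (bw q x * ((1 - q i) * q j)) * htp
      - (bw p x * ((1 - p i) * p j)) * htq + ((1 - p i) * p j * (q i * (1 - q j))) * hxy
  have hden (l : Fin n) : (1 - p l) * q l ≠ 0 :=
    mul_ne_zero (by linarith [(hp l).2]) (hq l).1.ne'
  unfold oddsRatio
  rw [div_mul_div_comm, div_mul_div_comm, div_eq_div_iff (hden i) (hden j)]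
  linear_combination hcross

end OddsRatio

/-- with `β i = (p i/(1-p i))·((1-q i)/q i)`, the following are
equivalent: (i) all `β i` are equal; (ii) for every `k ≤ n` the conditional laws of
`X` and `Y` given exactly `k` successes coincide; (iii) they coincide for some
`k ∈ {1,…,n-1}`. -/
theorem stmt3 {n : ℕ} (hn : 2 ≤ n) (p q : Fin n → ℝ)
    (hpq : ∀ i, 0 < p i ∧ p i ≤ q i ∧ q i < 1) :
    ((∀ i j : Fin n,
        p i / (1 - p i) * ((1 - q i) / q i) = p j / (1 - p j) * ((1 - q j) / q j)) ↔
      (∀ k : ℕ, k ≤ n → ∀ x : Fin n → Bool,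
        condPMF p (fun y => cnt y = k) x = condPMF q (fun y => cnt y = k) x)) ∧
    ((∀ i j : Fin n,
        p i / (1 - p i) * ((1 - q i) / q i) = p j / (1 - p j) * ((1 - q j) / q j)) ↔
      (∃ k : ℕ, 1 ≤ k ∧ k ≤ n - 1 ∧ ∀ x : Fin n → Bool,
        condPMF p (fun y => cnt y = k) x = condPMF q (fun y => cnt y = k) x)) := by
  have hp : ∀ i, 0 < p i ∧ p i < 1 := fun i => ⟨(hpq i).1, (hpq i).2.1.trans_lt (hpq i).2.2⟩
  have hq : ∀ i, 0 < q i ∧ q i < 1 := fun i => ⟨(hpq i).1.trans_le (hpq i).2.1, (hpq i).2.2⟩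
  have i₀ : Fin n := ⟨0, by omega⟩
  have level_of_const (h : ∀ i j, oddsRatio p q i = oddsRatio p q j) (k : ℕ) :=
    condPMF_cnt_eq_of_oddsRatio_eq hp hq (fun i => h i i₀) (oddsRatio_pos hp hq i₀).ne' k
  refine ⟨⟨fun h k _ => level_of_const h k, fun h => ?_⟩,
    ⟨fun h => ⟨1, le_rfl, by omega, level_of_const h 1⟩, ?_⟩⟩
  · exact oddsRatio_eq_of_condPMF_cnt_eq hp hq le_rfl (by omega) (h 1 (by omega))
  · rintro ⟨k, hk₀, hk, h⟩
    exact oddsRatio_eq_of_condPMF_cnt_eq hp hq hk₀ (by omega) h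
end
end

section
/- Let X and Y be vectors of independent Bernoulli random variables with parameters p_i and q_i respectively, 0 < p_i ≤ q_i < 1 for all i ∈ {1,...,n}. If p_i = q_i for some i but not for all i, then for every k ∈ {1,...,n-1}, the conditional law of X given ∑X_i ≥ k is NOT stochastically dominated by the conditional law of Y given ∑Y_i ≥ k. In fact, for any index i with p_i = q_i but p_j < q_j for some j ≠ i, one has P(X_i = 1 | ∑X ≥ k) > P(Y_i = 1 | ∑Y ≥ k). -/
open Finset
open scoped BigOperators Classical

noncomputable section

/-!
Fix `i` with `p i = q i = r`; let `S` count all successes and `T` those among the other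
coordinates. Then
`P(X_i = 1 | S ≥ k) = r / (r + (1 - r) * P(T ≥ k | T ≥ k - 1))`, so it suffices that
`P(T ≥ k | T ≥ k - 1)` is strictly increasing in each parameter of `T`. Writing `T = U + X_a`,
raising the parameter of `X_a` from `t` to `t'` changes the cross difference of these ratios by
`(t' - t) * (b (k - 1) * A (k - 1) - b (k - 2) * A k)`, where `b` and `A` are the mass function
and the upper tail of `U`; this is positive because `b` is log-concave. Domination would give
`P(X_i = 1 | S ≥ k) ≤ P(Y_i = 1 | S ≥ k)`, since `{x | x i = true}` is an upper set.
-/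

namespace IndepBernoulli

variable {ι : Type*} [DecidableEq ι]

def subsetWeight (v : ι → ℝ) (s t : Finset ι) : ℝ :=
  ∏ l ∈ s, if l ∈ t then v l else 1 - v l

def subsetProb (v : ι → ℝ) (s : Finset ι) (P : Finset ι → Prop) : ℝ :=
  ∑ t ∈ s.powerset, if P t then subsetWeight v s t else 0

section subsetProb

variable {v w : ι → ℝ} {s : Finset ι} {P Q : Finset ι → Prop}

lemma subsetWeight_nonneg (hv : ∀ l ∈ s, v l ∈ Set.Icc 0 1) (t : Finset ι) :
    0 ≤ subsetWeight v s t :=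
  prod_nonneg fun l hl => by
    obtain ⟨h0, h1⟩ := hv l hl
    split_ifs <;> linarith

lemma subsetWeight_pos (hv : ∀ l ∈ s, v l ∈ Set.Ioo 0 1) (t : Finset ι) :
    0 < subsetWeight v s t :=
  prod_pos fun l hl => by
    obtain ⟨h0, h1⟩ := hv l hl
    split_ifs <;> linarith

lemma subsetProb_nonneg (hv : ∀ l ∈ s, v l ∈ Set.Icc 0 1) (P : Finset ι → Prop) :
    0 ≤ subsetProb v s P :=
  sum_nonneg fun t _ => by
    split_ifs
    exacts [subsetWeight_nonneg hv t, le_rfl]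

lemma subsetWeight_le_subsetProb (hv : ∀ l ∈ s, v l ∈ Set.Icc 0 1) {t : Finset ι}
    (ht : t ⊆ s) (hP : P t) : subsetWeight v s t ≤ subsetProb v s P := by
  have h := single_le_sum (f := fun t => if P t then subsetWeight v s t else 0)
    (fun u _ => ?_) (mem_powerset.2 ht)
  · rwa [if_pos hP] at h
  · split_ifs
    exacts [subsetWeight_nonneg hv u, le_rfl]

lemma subsetProb_pos (hv : ∀ l ∈ s, v l ∈ Set.Ioo 0 1) {t : Finset ι} (ht : t ⊆ s)
    (hP : P t) : 0 < subsetProb v s P :=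
  (subsetWeight_pos hv t).trans_le <|
    subsetWeight_le_subsetProb (fun l hl => Set.Ioo_subset_Icc_self (hv l hl)) ht hP

lemma subsetProb_congr (hvw : ∀ l ∈ s, v l = w l) (hPQ : ∀ t ⊆ s, P t ↔ Q t) :
    subsetProb v s P = subsetProb w s Q := by
  refine sum_congr rfl fun t ht => ?_
  rw [mem_powerset] at ht
  rw [propext (hPQ t ht), subsetWeight, subsetWeight, prod_congr rfl fun l hl => by rw [hvw l hl]]

lemma subsetProb_insert {a : ι} (ha : a ∉ s) (P : Finset ι → Prop) :
    subsetProb v (insert a s) P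
      = (1 - v a) * subsetProb v s P + v a * subsetProb v s (fun t => P (insert a t)) := by
  rw [subsetProb, sum_powerset_insert ha, subsetProb, subsetProb, mul_sum, mul_sum]
  congr 1 <;> refine sum_congr rfl fun t ht => ?_ <;>
    have hat : a ∉ t := fun h => ha (mem_powerset.1 ht h)
  · rw [subsetWeight, prod_insert ha, if_neg hat, mul_ite, mul_zero, subsetWeight]
  · rw [subsetWeight, prod_insert ha, if_pos (mem_insert_self a t), mul_ite, mul_zero,
      subsetWeight, prod_congr rfl fun l hl => ?_]
    simp only [mem_insert, ne_of_mem_of_not_mem hl ha, false_or]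

end subsetProb

-- Thresholds live in `ℤ` so that shifts such as `m - 1` do not truncate; the mass at `m < 0`
-- is `0`.
def countPMF (v : ι → ℝ) (s : Finset ι) (m : ℤ) : ℝ :=
  subsetProb v s fun t => (#t : ℤ) = m

def countTail (v : ι → ℝ) (s : Finset ι) (m : ℤ) : ℝ :=
  subsetProb v s fun t => m ≤ (#t : ℤ)

section count

variable {v : ι → ℝ} {s : Finset ι}

lemma countPMF_insert {a : ι} (ha : a ∉ s) (m : ℤ) :
    countPMF v (insert a s) m = (1 - v a) * countPMF v s m + v a * countPMF v s (m - 1) := by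
  rw [countPMF, subsetProb_insert ha]
  congr 2
  exact subsetProb_congr (fun _ _ => rfl) fun t ht => by
    rw [card_insert_of_notMem fun h => ha (ht h)]
    omega

lemma countTail_insert {a : ι} (ha : a ∉ s) (m : ℤ) :
    countTail v (insert a s) m = (1 - v a) * countTail v s m + v a * countTail v s (m - 1) := by
  rw [countTail, subsetProb_insert ha]
  congr 2
  exact subsetProb_congr (fun _ _ => rfl) fun t ht => by
    rw [card_insert_of_notMem fun h => ha (ht h)]
    omega

lemma countPMF_empty (m : ℤ) : countPMF v ∅ m = if m = 0 then 1 else 0 := by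
  rw [countPMF, subsetProb, powerset_empty, sum_singleton]
  simp [subsetWeight, eq_comm]

lemma countPMF_eq_zero_of_card_lt {m : ℤ} (hm : #s < m) : countPMF v s m = 0 :=
  sum_eq_zero fun t ht => if_neg <| by
    have := card_le_card (mem_powerset.1 ht)
    omega

lemma countTail_eq_zero_of_card_lt {m : ℤ} (hm : #s < m) : countTail v s m = 0 :=
  sum_eq_zero fun t ht => if_neg <| by
    have := card_le_card (mem_powerset.1 ht)
    omega

lemma countPMF_pos (hv : ∀ l ∈ s, v l ∈ Set.Ioo 0 1) {m : ℤ} (hm0 : 0 ≤ m) (hm : m ≤ #s) :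
    0 < countPMF v s m := by
  obtain ⟨t, hts, ht⟩ := exists_subset_card_eq (s := s) (n := m.toNat) (by omega)
  exact subsetProb_pos hv hts (by omega)

lemma countTail_pos (hv : ∀ l ∈ s, v l ∈ Set.Ioo 0 1) {m : ℤ} (hm : m ≤ #s) :
    0 < countTail v s m :=
  subsetProb_pos hv subset_rfl hm

lemma countTail_eq_countPMF_add (m : ℤ) :
    countTail v s m = countPMF v s m + countTail v s (m + 1) := by
  simp only [countTail, countPMF, subsetProb, ← sum_add_distrib]
  refine sum_congr rfl fun t _ => ?_
  split_ifs <;> first | (exfalso; omega) | simp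

lemma countTail_eq_sum_range_add (m : ℤ) (L : ℕ) :
    countTail v s m = ∑ l ∈ range L, countPMF v s (m + l) + countTail v s (m + L) := by
  induction L with
  | zero => simp
  | succ L ih =>
    rw [ih, sum_range_succ, countTail_eq_countPMF_add (m + L), add_assoc]
    push_cast
    ring_nf

-- The induction needs this four-index form for the cross terms; where `b` vanishes it does not
-- follow from `b (m - 1) * b (m + 1) ≤ b m ^ 2`.
lemma countPMF_mul_le (hv : ∀ l ∈ s, v l ∈ Set.Icc 0 1) {a b c d : ℤ} (habcd : a + d = b + c)
    (hab : a ≤ b) (hac : a ≤ c) :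
    countPMF v s a * countPMF v s d ≤ countPMF v s b * countPMF v s c := by
  induction s using Finset.induction_on generalizing a b c d with
  | empty =>
    simp only [countPMF_empty]
    split_ifs <;> first | (exfalso; omega) | simp
  | @insert x s hx ih =>
    have hv' : ∀ l ∈ s, v l ∈ Set.Icc 0 1 := fun l hl => hv l (mem_insert_of_mem hl)
    obtain ⟨h0, h1⟩ := hv x (mem_insert_self x s)
    set e := countPMF v s
    have hout : e a * e d ≤ e b * e c := ih hv' habcd hab hac
    have hin : e (a - 1) * e (d - 1) ≤ e (b - 1) * e (c - 1) :=
      ih hv' (by omega) (by omega) (by omega)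
    have hmid : e a * e (d - 1) + e (a - 1) * e d ≤ e b * e (c - 1) + e (b - 1) * e c := by
      obtain rfl | hab := hab.eq_or_lt
      · obtain rfl : d = c := by omega
        exact le_rfl
      obtain rfl | hac := hac.eq_or_lt
      · obtain rfl : d = b := by omega
        linarith
      linarith [ih hv' (a := a) (b := b) (c := c - 1) (d := d - 1) (by omega) hab.le (by omega),
        ih hv' (a := a - 1) (b := b - 1) (c := c) (d := d) (by omega) (by omega) (by omega)]
    simp only [countPMF_insert hx]
    have h2 : 0 ≤ (1 - v x) * v x := mul_nonneg (by linarith) h0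
    linarith [mul_le_mul_of_nonneg_left hout (sq_nonneg (1 - v x)),
      mul_le_mul_of_nonneg_left hin (sq_nonneg (v x)), mul_le_mul_of_nonneg_left hmid h2]

lemma countPMF_mul_countTail_lt (hv : ∀ l ∈ s, v l ∈ Set.Ioo 0 1) {m : ℤ} (hm0 : 0 ≤ m)
    (hm : m ≤ #s) :
    countPMF v s (m - 1) * countTail v s (m + 1) < countPMF v s m * countTail v s m := by
  have hv' : ∀ l ∈ s, v l ∈ Set.Icc 0 1 := fun l hl => Set.Ioo_subset_Icc_self (hv l hl)
  rw [countTail_eq_sum_range_add m (#s + 1), countTail_eq_sum_range_add (m + 1) (#s + 1),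
    countTail_eq_zero_of_card_lt (by omega), countTail_eq_zero_of_card_lt (by omega),
    add_zero, add_zero, mul_sum, mul_sum]
  refine sum_lt_sum (fun l _ => countPMF_mul_le hv' (by ring) (by omega) (by omega))
    ⟨(#s - m).toNat, mem_range.2 (by omega), ?_⟩
  rw [countPMF_eq_zero_of_card_lt (m := m + 1 + (#s - m).toNat) (by omega), mul_zero]
  exact mul_pos (countPMF_pos hv hm0 hm) (countPMF_pos hv (by omega) (by omega))

end count

def tailRatio (v : ι → ℝ) (s : Finset ι) (m : ℤ) : ℝ :=
  countTail v s (m + 1) / countTail v s m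

section tailRatio

variable {v w : ι → ℝ} {s : Finset ι} {m : ℤ}

lemma tailRatio_nonneg (hv : ∀ l ∈ s, v l ∈ Set.Icc 0 1) (m : ℤ) : 0 ≤ tailRatio v s m :=
  div_nonneg (subsetProb_nonneg hv _) (subsetProb_nonneg hv _)

lemma tailRatio_congr (hvw : ∀ l ∈ s, v l = w l) (m : ℤ) : tailRatio v s m = tailRatio w s m := by
  simp only [tailRatio, countTail, subsetProb_congr hvw fun _ _ => Iff.rfl]

lemma countTail_cross_sub_eq {a : ι} (ha : a ∈ s) (hvw : ∀ l ∈ s, l ≠ a → v l = w l) (m : ℤ) :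
    countTail w s (m + 1) * countTail v s m - countTail v s (m + 1) * countTail w s m
      = (w a - v a) * (countPMF v (s.erase a) m * countTail v (s.erase a) m
          - countPMF v (s.erase a) (m - 1) * countTail v (s.erase a) (m + 1)) := by
  have hw : ∀ m, countTail w (s.erase a) m = countTail v (s.erase a) m := fun m =>
    subsetProb_congr (fun l hl => (hvw l (mem_of_mem_erase hl) (ne_of_mem_erase hl)).symm)
      fun _ _ => Iff.rfl
  have hm := countTail_eq_countPMF_add (v := v) (s := s.erase a) m
  have hm' := countTail_eq_countPMF_add (v := v) (s := s.erase a) (m - 1)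
  rw [sub_add_cancel] at hm'
  conv_lhs => rw [← insert_erase ha]
  simp only [countTail_insert (notMem_erase a s), hw, add_sub_cancel_right, hm', hm]
  ring

lemma tailRatio_lt_of_eqOn_of_lt (hv : ∀ l ∈ s, v l ∈ Set.Ioo 0 1)
    (hw : ∀ l ∈ s, w l ∈ Set.Ioo 0 1) {a : ι} (ha : a ∈ s) (hvw : ∀ l ∈ s, l ≠ a → v l = w l)
    (hlt : v a < w a) (hm0 : 0 ≤ m) (hm : m + 1 ≤ #s) : tailRatio v s m < tailRatio w s m := by
  have hcard : (#(s.erase a) : ℤ) = #s - 1 := by rw [card_erase_of_mem ha]; omega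
  have hδ := countPMF_mul_countTail_lt (fun l hl => hv l (mem_of_mem_erase hl)) hm0
    (hcard ▸ (by omega : m ≤ #s - 1))
  rw [tailRatio, tailRatio, div_lt_div_iff₀ (countTail_pos hv (by omega))
    (countTail_pos hw (by omega))]
  linarith [countTail_cross_sub_eq ha hvw m, mul_pos (sub_pos.2 hlt) (sub_pos.2 hδ)]

lemma tailRatio_mono (hv : ∀ l ∈ s, v l ∈ Set.Ioo 0 1) (hw : ∀ l ∈ s, w l ∈ Set.Ioo 0 1)
    (hvw : ∀ l ∈ s, v l ≤ w l) (hm0 : 0 ≤ m) (hm : m + 1 ≤ #s) :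
    tailRatio v s m ≤ tailRatio w s m := by
  let mix (D : Finset ι) (l : ι) : ℝ := if l ∈ D then w l else v l
  have hmix : ∀ D, ∀ l ∈ s, mix D l ∈ Set.Ioo 0 1 := fun D l hl => by
    dsimp only [mix]
    split_ifs
    exacts [hw l hl, hv l hl]
  refine (induction_on' s (motive := fun D => tailRatio v s m ≤ tailRatio (mix D) s m)
    (by simp [mix]) fun a D ha _ haD ih => ih.trans ?_).trans_eq
    (tailRatio_congr (fun l hl => by simp [mix, hl]) m)
  obtain heq | hlt := (hvw a ha).eq_or_lt
  · refine (tailRatio_congr (fun l _ => ?_) m).le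
    by_cases hl : l = a
    · simp [mix, hl, haD, heq]
    · simp [mix, hl]
  · exact (tailRatio_lt_of_eqOn_of_lt (hmix D) (hmix _) ha (fun l _ hl => by simp [mix, hl])
      (by simpa [mix, haD] using hlt) hm0 hm).le

lemma tailRatio_lt_of_le_of_lt (hv : ∀ l ∈ s, v l ∈ Set.Ioo 0 1)
    (hw : ∀ l ∈ s, w l ∈ Set.Ioo 0 1) (hvw : ∀ l ∈ s, v l ≤ w l) {j : ι} (hj : j ∈ s)
    (hlt : v j < w j) (hm0 : 0 ≤ m) (hm : m + 1 ≤ #s) : tailRatio v s m < tailRatio w s m := by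
  set u := Function.update v j (w j)
  have hu : ∀ l ∈ s, u l ∈ Set.Ioo 0 1 := fun l hl => by
    by_cases h : l = j
    · simpa [u, h] using hw j hj
    · simpa [u, h] using hv l hl
  refine (tailRatio_lt_of_eqOn_of_lt hv hu hj (fun l _ hl => by simp [u, hl]) (by simpa [u])
    hm0 hm).trans_le (tailRatio_mono hu hw (fun l hl => ?_) hm0 hm)
  by_cases h : l = j
  · simp [u, h]
  · simpa [u, h] using hvw l hl

end tailRatio

section erase

variable {v : ι → ℝ} {s : Finset ι} {i : ι}

lemma subsetProb_eq_of_mem (hi : i ∈ s) (P : Finset ι → Prop) :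
    subsetProb v s P = (1 - v i) * subsetProb v (s.erase i) P
      + v i * subsetProb v (s.erase i) (fun t => P (insert i t)) := by
  conv_lhs => rw [← insert_erase hi]
  exact subsetProb_insert (notMem_erase i s) P

lemma countTail_eq_of_mem (hi : i ∈ s) (m : ℤ) :
    countTail v s m
      = (1 - v i) * countTail v (s.erase i) m + v i * countTail v (s.erase i) (m - 1) := by
  conv_lhs => rw [← insert_erase hi]
  exact countTail_insert (notMem_erase i s) m

lemma subsetProb_mem_and_le_card (hi : i ∈ s) (m : ℤ) :
    subsetProb v s (fun t => i ∈ t ∧ m ≤ (#t : ℤ)) = v i * countTail v (s.erase i) (m - 1) := by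
  have hnot : ∀ t ⊆ s.erase i, i ∉ t := fun t ht h => notMem_erase i s (ht h)
  have hzero : subsetProb v (s.erase i) (fun t => i ∈ t ∧ m ≤ (#t : ℤ)) = 0 :=
    sum_eq_zero fun t ht => if_neg fun h => hnot t (mem_powerset.1 ht) h.1
  rw [subsetProb_eq_of_mem hi, hzero, mul_zero, zero_add, countTail]
  congr 1
  exact subsetProb_congr (fun _ _ => rfl) fun t ht => by
    rw [card_insert_of_notMem (hnot t ht)]
    simp only [mem_insert_self, true_and]
    omega

end erase

def boolFunEquivFinset [Fintype ι] : (ι → Bool) ≃ Finset ι where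
  toFun x := univ.filter fun l => x l = true
  invFun t l := decide (l ∈ t)
  left_inv x := by funext l; simp
  right_inv t := by ext l; simp

section cube

variable {n : ℕ}

lemma cnt_eq_card (x : Fin n → Bool) : cnt x = #(boolFunEquivFinset x) :=
  (card_filter _ _).symm

lemma bpr_eq_subsetProb (v : Fin n → ℝ) {A : (Fin n → Bool) → Prop} {P : Finset (Fin n) → Prop}
    (hAP : ∀ x, A x ↔ P (boolFunEquivFinset x)) : bpr v A = subsetProb v univ P := by
  rw [subsetProb, powerset_univ, bpr]
  refine Fintype.sum_equiv boolFunEquivFinset _ _ fun x => ?_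
  rw [bw, subsetWeight]
  simp only [boolFunEquivFinset, Equiv.coe_fn_mk, mem_filter, mem_univ, true_and]
  exact if_congr (hAP x) rfl rfl

lemma bpr_coord_and_le_cnt (v : Fin n → ℝ) (i : Fin n) (k : ℕ) :
    bpr v (fun x => x i = true ∧ k ≤ cnt x) = v i * countTail v (univ.erase i) (k - 1) := by
  rw [← subsetProb_mem_and_le_card (mem_univ i)]
  refine bpr_eq_subsetProb v fun x => ?_
  simp [cnt_eq_card, boolFunEquivFinset]

lemma bpr_le_cnt (v : Fin n → ℝ) (i : Fin n) (k : ℕ) :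
    bpr v (fun x => k ≤ cnt x) = (1 - v i) * countTail v (univ.erase i) k
      + v i * countTail v (univ.erase i) (k - 1) := by
  rw [← countTail_eq_of_mem (mem_univ i)]
  refine bpr_eq_subsetProb v fun x => ?_
  simp [cnt_eq_card]

lemma bpr_coord_div_bpr_eq {v : Fin n → ℝ} (hv : ∀ l, v l ∈ Set.Ioo 0 1) (i : Fin n) {k : ℕ}
    (hk : k ≤ n) :
    bpr v (fun x => x i = true ∧ k ≤ cnt x) / bpr v (fun x => k ≤ cnt x)
      = v i / (v i + (1 - v i) * tailRatio v (univ.erase i) (k - 1)) := by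
  have hpos : 0 < countTail v (univ.erase i) (k - 1) :=
    countTail_pos (fun l _ => hv l)
      (by rw [card_erase_of_mem (mem_univ i), card_univ, Fintype.card_fin]; omega)
  have hvi := (hv i).1
  rw [bpr_coord_and_le_cnt, bpr_le_cnt, tailRatio, sub_add_cancel]
  field_simp
  ring

lemma condProb_coord_lt {p q : Fin n → ℝ} (hp : ∀ l, p l ∈ Set.Ioo 0 1)
    (hq : ∀ l, q l ∈ Set.Ioo 0 1) (hpq : ∀ l, p l ≤ q l) {i j : Fin n} (hpi : p i = q i)
    (hji : j ≠ i) (hj : p j < q j) {k : ℕ} (hk1 : 1 ≤ k) (hkn : k + 1 ≤ n) :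
    bpr q (fun x => x i = true ∧ k ≤ cnt x) / bpr q (fun x => k ≤ cnt x)
      < bpr p (fun x => x i = true ∧ k ≤ cnt x) / bpr p (fun x => k ≤ cnt x) := by
  have hg := tailRatio_lt_of_le_of_lt (s := univ.erase i) (m := k - 1) (fun l _ => hp l)
    (fun l _ => hq l) (fun l _ => hpq l) (mem_erase.2 ⟨hji, mem_univ j⟩) hj (by omega)
    (by rw [card_erase_of_mem (mem_univ i), card_univ, Fintype.card_fin]; omega)
  have hg0 := tailRatio_nonneg (fun l _ => Set.Ioo_subset_Icc_self (hp l))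
    (s := univ.erase i) (k - 1)
  obtain ⟨hqi0, hqi1⟩ := hq i
  rw [bpr_coord_div_bpr_eq hq i (by omega), bpr_coord_div_bpr_eq hp i (by omega), hpi]
  exact div_lt_div_of_pos_left hqi0 (by nlinarith)
    (by linarith [mul_lt_mul_of_pos_left hg (sub_pos.2 hqi1)])

lemma sum_ite_mem_condPMF (v : Fin n → ℝ) (A : (Fin n → Bool) → Prop) (U : Set (Fin n → Bool)) :
    (∑ x, if x ∈ U then condPMF v A x else 0) = bpr v (fun x => x ∈ U ∧ A x) / bpr v A := by
  simp only [condPMF, bpr, sum_div]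
  refine sum_congr rfl fun x _ => ?_
  by_cases hU : x ∈ U <;> by_cases hA : A x <;> simp [hU, hA]

end cube

end IndepBernoulli

theorem dominates.sum_ite_mem_le {n : ℕ} {μ ν : (Fin n → Bool) → ℝ} (h : dominates μ ν)
    {U : Set (Fin n → Bool)} (hU : IsUpperSet U) :
    (∑ x, if x ∈ U then μ x else 0) ≤ ∑ x, if x ∈ U then ν x else 0 := by
  obtain ⟨c, hc0, hcμ, hcν, hc⟩ := h
  calc (∑ x, if x ∈ U then μ x else 0)
      = ∑ x, ∑ y, if x ∈ U then c x y else 0 := sum_congr rfl fun x _ => by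
        rw [← hcμ x]; split_ifs <;> simp
    _ ≤ ∑ x, ∑ y, if y ∈ U then c x y else 0 := sum_le_sum fun x _ => sum_le_sum fun y _ => by
        by_cases hxy : c x y = 0
        · simp [hxy]
        split_ifs with hx hy
        exacts [le_rfl, absurd (hU (hc x y hxy) hx) hy, hc0 x y, le_rfl]
    _ = ∑ y, if y ∈ U then ν y else 0 := by
        rw [sum_comm]
        exact sum_congr rfl fun y _ => by rw [← hcν y]; split_ifs <;> simp

open IndepBernoulli in
/-- if `p i = q i` for some but not all `i`, then the conditional law of
`X` given `∑X ≥ k` is not stochastically dominated by that of `Y` given `∑Y ≥ k`;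
in fact for any `i` with `p i = q i` and `p j < q j` for some `j ≠ i`,
`P(X_i = 1 | ∑X ≥ k) > P(Y_i = 1 | ∑Y ≥ k)`. -/
theorem stmt7 {n : ℕ} (p q : Fin n → ℝ)
    (hpq : ∀ i, 0 < p i ∧ p i ≤ q i ∧ q i < 1)
    (k : ℕ) (hk1 : 1 ≤ k) (hk2 : k ≤ n - 1) :
    (∀ i : Fin n, p i = q i → (∃ j, j ≠ i ∧ p j < q j) →
      bpr q (fun x => x i = true ∧ k ≤ cnt x) / bpr q (fun x => k ≤ cnt x)
        < bpr p (fun x => x i = true ∧ k ≤ cnt x) / bpr p (fun x => k ≤ cnt x)) ∧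
    ((∃ i, p i = q i) → (∃ j, p j < q j) →
      ¬ dominates (condPMF p (fun x => k ≤ cnt x)) (condPMF q (fun x => k ≤ cnt x))) := by
  have hp : ∀ l, p l ∈ Set.Ioo 0 1 := fun l => ⟨(hpq l).1, (hpq l).2.1.trans_lt (hpq l).2.2⟩
  have hq : ∀ l, q l ∈ Set.Ioo 0 1 := fun l => ⟨(hpq l).1.trans_le (hpq l).2.1, (hpq l).2.2⟩
  refine ⟨fun i hpi ⟨j, hji, hj⟩ =>
    condProb_coord_lt hp hq (fun l => (hpq l).2.1) hpi hji hj hk1 (by omega), ?_⟩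
  rintro ⟨i, hpi⟩ ⟨j, hj⟩ hdom
  have hji : j ≠ i := by rintro rfl; exact hj.ne hpi
  have hmarg := hdom.sum_ite_mem_le (U := {x | x i = true}) fun _ _ hxy hx => hxy i hx
  rw [sum_ite_mem_condPMF, sum_ite_mem_condPMF] at hmarg
  exact (condProb_coord_lt hp hq (fun l => (hpq l).2.1) hpi hji hj hk1 (by omega)).not_ge hmarg
end
end

section
/- Let X be a random variable with distribution function F and Y a random variable with distribution function G. Then the supremum over all couplings of (X,Y) of P(X ≤ Y) equals inf_{z∈ℝ} (F(z) - G(z)) + 1. -/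
/-!
Upper bound: `{X ≤ Y} ∩ {Y ≤ z} ⊆ {X ≤ z}`, so inclusion–exclusion gives
`P(X ≤ Y) + G(z) ≤ 1 + F(z)` for every coupling and every `z`.

Lower bound: put `α = sup_z (G(z) - F(z)) ∈ [0, 1]`. For `U` uniform on `(0, 1]` let
`Y = G⁻¹(U)` and `X = F⁻¹(U - α mod 1)` with the quantile functions `F⁻¹`, `G⁻¹`. The cyclic shift
preserves the uniform law, so this is a coupling, and on `{U > α}`, of probability `1 - α`,
`G ≤ F + α` forces `X ≤ Y`.
-/

open MeasureTheory Set Filter Topology ProbabilityTheory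

noncomputable def quantile (μ : Measure ℝ) (u : ℝ) : ℝ :=
  if u ∈ Ioo 0 1 then sInf {x | u ≤ cdf μ x} else 0

section Quantile

variable (μ : Measure ℝ)

theorem quantile_le_iff {u : ℝ} (hu : u ∈ Ioo 0 1) (x : ℝ) :
    quantile μ u ≤ x ↔ u ≤ cdf μ x := by
  have hne : {x | u ≤ cdf μ x}.Nonempty :=
    ((tendsto_cdf_atTop μ).eventually (eventually_ge_nhds hu.2)).exists
  have hbdd : BddBelow {x | u ≤ cdf μ x} := by
    obtain ⟨y, hy⟩ := ((tendsto_cdf_atBot μ).eventually (eventually_lt_nhds hu.1)).exists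
    refine ⟨y, fun z hz => le_of_not_gt fun hzy => ?_⟩
    exact (hz.trans (monotone_cdf μ hzy.le)).not_gt hy
  rw [quantile, if_pos hu]
  refine ⟨fun h => ?_, fun h => csInf_le hbdd h⟩
  have hright : ∀ᶠ y in 𝓝[>] x, u ≤ cdf μ y := by
    filter_upwards [self_mem_nhdsWithin] with y hy
    obtain ⟨w, hw, hwy⟩ := exists_lt_of_csInf_lt hne (h.trans_lt hy)
    exact hw.trans (monotone_cdf μ hwy.le)
  exact ge_of_tendsto (((cdf μ).right_continuous x).mono Ioi_subset_Ici_self) hright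

theorem measurable_quantile : Measurable (quantile μ) := by
  refine measurable_of_Iic fun x => ?_
  have : quantile μ ⁻¹' Iic x = Ioo 0 1 ∩ Iic (cdf μ x) ∪ (Ioo 0 1)ᶜ ∩ {_u | 0 ≤ x} := by
    ext u
    by_cases hu : u ∈ Ioo 0 1
    · simp [hu, quantile_le_iff μ hu]
    · simp [hu, quantile]
  rw [this]
  exact (measurableSet_Ioo.inter measurableSet_Iic).union
    (measurableSet_Ioo.compl.inter (MeasurableSet.const _))

end Quantile

theorem volume_restrict_Ioc_zero_one_Iic {c : ℝ} (hc : c ≤ 1) :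
    volume.restrict (Ioc (0 : ℝ) 1) (Iic c) = ENNReal.ofReal c := by
  rw [Measure.restrict_apply measurableSet_Iic, inter_comm, Ioc_inter_Iic, min_eq_right hc,
    Real.volume_Ioc, sub_zero]

theorem map_quantile_volume_restrict_Ioc (μ : Measure ℝ) [IsProbabilityMeasure μ] :
    (volume.restrict (Ioc (0 : ℝ) 1)).map (quantile μ) = μ := by
  have hIoo : ∀ᵐ u ∂volume.restrict (Ioc (0 : ℝ) 1), u ∈ Ioo 0 1 := by
    rw [← Measure.restrict_congr_set Ioo_ae_eq_Ioc]
    exact ae_restrict_mem measurableSet_Ioo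
  refine Measure.ext_of_Iic _ _ fun x => ?_
  have hpre : quantile μ ⁻¹' Iic x =ᵐ[volume.restrict (Ioc (0 : ℝ) 1)] Iic (cdf μ x) := by
    filter_upwards [hIoo] with u hu
    exact propext (quantile_le_iff μ hu x)
  rw [Measure.map_apply (measurable_quantile μ) measurableSet_Iic, measure_congr hpre,
    volume_restrict_Ioc_zero_one_Iic (cdf_le_one μ x), ofReal_cdf]

theorem map_add_const_volume_restrict_Ioc (a b c : ℝ) :
    (volume.restrict (Ioc a b)).map (· + c) = volume.restrict (Ioc (a + c) (b + c)) := by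
  have h := Measure.restrict_map (μ := volume) (measurable_add_const c)
    (measurableSet_Ioc (a := a + c) (b := b + c))
  rwa [map_add_right_eq_self, preimage_add_const_Ioc, add_sub_cancel_right,
    add_sub_cancel_right, eq_comm] at h

theorem restrict_Ioc_eq_add_restrict_Ioc {E : Type*} [MeasurableSpace E] [LinearOrder E]
    [TopologicalSpace E] [OrderClosedTopology E] [OpensMeasurableSpace E] {μ : Measure E}
    {a b c : E} (hab : a ≤ b) (hbc : b ≤ c) :
    μ.restrict (Ioc a c) = μ.restrict (Ioc a b) + μ.restrict (Ioc b c) := by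
  rw [← Ioc_union_Ioc_eq_Ioc hab hbc,
    Measure.restrict_union (Ioc_disjoint_Ioc_of_le le_rfl) measurableSet_Ioc]

noncomputable def cyclicShift (α u : ℝ) : ℝ :=
  if u ≤ α then u + (1 - α) else u + -α

theorem measurable_cyclicShift (α : ℝ) : Measurable (cyclicShift α) :=
  Measurable.ite measurableSet_Iic (measurable_add_const _) (measurable_add_const _)

theorem map_cyclicShift_volume_restrict_Ioc {α : ℝ} (h0 : 0 ≤ α) (h1 : α ≤ 1) :
    (volume.restrict (Ioc (0 : ℝ) 1)).map (cyclicShift α) = volume.restrict (Ioc (0 : ℝ) 1) := by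
  have hlow : (volume.restrict (Ioc 0 α)).map (cyclicShift α)
      = volume.restrict (Ioc (1 - α) 1) := by
    have hshift : cyclicShift α =ᵐ[volume.restrict (Ioc 0 α)] (· + (1 - α)) :=
      ae_restrict_of_forall_mem measurableSet_Ioc fun u hu => if_pos hu.2
    rw [Measure.map_congr hshift, map_add_const_volume_restrict_Ioc, zero_add, add_sub_cancel]
  have hhigh : (volume.restrict (Ioc α 1)).map (cyclicShift α)
      = volume.restrict (Ioc 0 (1 - α)) := by
    have hshift : cyclicShift α =ᵐ[volume.restrict (Ioc α 1)] (· + -α) :=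
      ae_restrict_of_forall_mem measurableSet_Ioc fun u hu => if_neg (not_le.2 hu.1)
    rw [Measure.map_congr hshift, map_add_const_volume_restrict_Ioc, add_neg_cancel,
      ← sub_eq_add_neg]
  conv_lhs => rw [restrict_Ioc_eq_add_restrict_Ioc h0 h1]
  rw [Measure.map_add _ _ (measurable_cyclicShift α), hlow, hhigh, add_comm,
    ← restrict_Ioc_eq_add_restrict_Ioc (by linarith) (by linarith)]

theorem measureReal_le_add_cdf_sub_cdf (μ ν : Measure ℝ) [IsProbabilityMeasure μ]
    [IsProbabilityMeasure ν] (π : Measure (ℝ × ℝ)) [IsProbabilityMeasure π]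
    (hfst : π.map Prod.fst = μ) (hsnd : π.map Prod.snd = ν) (z : ℝ) :
    π.real {p | p.1 ≤ p.2} ≤ cdf μ z - cdf ν z + 1 := by
  have hY : MeasurableSet (Prod.snd ⁻¹' Iic z : Set (ℝ × ℝ)) := measurable_snd measurableSet_Iic
  have hsub : {p : ℝ × ℝ | p.1 ≤ p.2} ∩ Prod.snd ⁻¹' Iic z ⊆ Prod.fst ⁻¹' Iic z :=
    fun p hp => (hp.1.trans hp.2 : p.1 ≤ z)
  have hsum := measureReal_union_add_inter (μ := π) (s := {p : ℝ × ℝ | p.1 ≤ p.2}) hY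
  rw [cdf_eq_real, cdf_eq_real, ← hfst, ← hsnd, map_measureReal_apply measurable_fst
    measurableSet_Iic, map_measureReal_apply measurable_snd measurableSet_Iic]
  linarith [measureReal_mono (μ := π) hsub, measureReal_le_one (μ := π)
    (s := {p : ℝ × ℝ | p.1 ≤ p.2} ∪ Prod.snd ⁻¹' Iic z)]

theorem exists_coupling_one_sub_le_measureReal (μ ν : Measure ℝ) [IsProbabilityMeasure μ]
    [IsProbabilityMeasure ν] {α : ℝ} (h0 : 0 ≤ α) (h1 : α ≤ 1)
    (hα : ∀ x, cdf ν x - α ≤ cdf μ x) :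
    ∃ π : Measure (ℝ × ℝ), IsProbabilityMeasure π ∧ π.map Prod.fst = μ ∧
      π.map Prod.snd = ν ∧ 1 - α ≤ π.real {p | p.1 ≤ p.2} := by
  set P := volume.restrict (Ioc (0 : ℝ) 1)
  have : IsProbabilityMeasure P := ⟨by simp [P, Real.volume_Ioc]⟩
  set g : ℝ → ℝ × ℝ := fun u => (quantile μ (cyclicShift α u), quantile ν u)
  have hg : Measurable g :=
    ((measurable_quantile μ).comp (measurable_cyclicShift α)).prodMk (measurable_quantile ν)
  have hsub : Ioo α 1 ⊆ g ⁻¹' {p | p.1 ≤ p.2} := by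
    -- `cdf ν ≥ u` at `quantile ν u`, hence `cdf μ ≥ u - α` there.
    intro u hu
    have hu' : u ∈ Ioo 0 1 := ⟨h0.trans_lt hu.1, hu.2⟩
    have hshift : cyclicShift α u = u - α := if_neg (not_le.2 hu.1)
    show quantile μ (cyclicShift α u) ≤ quantile ν u
    rw [hshift, quantile_le_iff μ ⟨by linarith [hu.1], by linarith [hu.2]⟩]
    linarith [hα (quantile ν u), (quantile_le_iff ν hu' _).1 le_rfl]
  refine ⟨P.map g, Measure.isProbabilityMeasure_map hg.aemeasurable, ?_, ?_, ?_⟩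
  · rw [Measure.map_map measurable_fst hg,
      show Prod.fst ∘ g = quantile μ ∘ cyclicShift α from rfl,
      ← Measure.map_map (measurable_quantile μ) (measurable_cyclicShift α),
      map_cyclicShift_volume_restrict_Ioc h0 h1, map_quantile_volume_restrict_Ioc]
  · rw [Measure.map_map measurable_snd hg]
    exact map_quantile_volume_restrict_Ioc ν
  · calc 1 - α = P.real (Ioo α 1) := by
          rw [measureReal_restrict_apply measurableSet_Ioo,
            inter_eq_left.2 (Ioo_subset_Ioc_self.trans (Ioc_subset_Ioc_left h0)),
            Real.volume_real_Ioo_of_le h1]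
      _ ≤ P.real (g ⁻¹' {p | p.1 ≤ p.2}) := measureReal_mono hsub
      _ = _ := (map_measureReal_apply hg (measurableSet_le measurable_fst measurable_snd)).symm

/-- the supremum over all couplings of `(X, Y)` of `P(X ≤ Y)` equals
`inf_z (F(z) − G(z)) + 1`, where `F`, `G` are the distribution functions of `X`, `Y`. -/
theorem stmt8 (μ ν : Measure ℝ) [IsProbabilityMeasure μ] [IsProbabilityMeasure ν] :
    sSup {r : ℝ | ∃ π : Measure (ℝ × ℝ), IsProbabilityMeasure π ∧
        π.map Prod.fst = μ ∧ π.map Prod.snd = ν ∧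
        r = (π {x : ℝ × ℝ | x.1 ≤ x.2}).toReal}
      = (⨅ z : ℝ, (μ (Set.Iic z)).toReal - (ν (Set.Iic z)).toReal) + 1 := by
  simp only [← measureReal_def, ← cdf_eq_real]
  set a := ⨅ z, cdf μ z - cdf ν z
  have hbdd : BddBelow (range fun z => cdf μ z - cdf ν z) :=
    ⟨-1, by rintro _ ⟨z, rfl⟩; linarith [cdf_nonneg μ z, cdf_le_one ν z]⟩
  have ha_le : ∀ z, a ≤ cdf μ z - cdf ν z := ciInf_le hbdd
  have hlim : Tendsto (fun z => cdf μ z - cdf ν z) atTop (𝓝 0) := by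
    simpa using (tendsto_cdf_atTop μ).sub (tendsto_cdf_atTop ν)
  have ha_nonpos : a ≤ 0 := ge_of_tendsto' hlim ha_le
  have ha_ge : -1 ≤ a := le_ciInf fun z => by linarith [cdf_nonneg μ z, cdf_le_one ν z]
  have hupper : ∀ π : Measure (ℝ × ℝ), IsProbabilityMeasure π → π.map Prod.fst = μ →
      π.map Prod.snd = ν → π.real {x | x.1 ≤ x.2} ≤ a + 1 := fun π _ hfst hsnd =>
    sub_le_iff_le_add.1 (le_ciInf fun z => by
      linarith [measureReal_le_add_cdf_sub_cdf μ ν π hfst hsnd z])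
  obtain ⟨π, hπ, hfst, hsnd, hlower⟩ := exists_coupling_one_sub_le_measureReal μ ν (α := -a)
    (by linarith) (by linarith) fun x => by linarith [ha_le x]
  refine IsGreatest.csSup_eq ⟨⟨π, hπ, hfst, hsnd, ?_⟩, ?_⟩
  · linarith [hupper π hπ hfst hsnd]
  · rintro r ⟨π, hπ, hfst, hsnd, rfl⟩
    exact hupper π hπ hfst hsnd
end

section
/- For every positive integer m, m! = √(2π(m+η_m)) · m^m · e^{-m} for some η_m with 1/7 < η_m < 1/5; moreover this representation extends to m = 0 (where 0! = 1 = √(2πη_0) · 1 for some η_0 ∈ (1/7,1/5)). -/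
/-!
Write `sₙ = n! / (√(2n) (n/e)ⁿ)` for the Stirling sequence, which decreases to `√π`. Its successive
log-differences lie between `1/(14 n (n+1))` (the first term of their series expansion) and
`1/(12 n (n+1))` (Robbins); telescoping to the limit gives
`1/(7n) ≤ log ((sₙ/√π)²) ≤ 1/(6n)`. The choice `η = n ((sₙ/√π)² - 1)` makes the identity exact, and
`x < eˣ - 1 < x/(1-x)` for `0 < x < 1` puts it in `(1/7, 1/5)`. For `m = 0` take `η = 1/(2π)`.
-/

open Real Filter Topology Stirling
open scoped Nat

theorem sub_le_of_tendsto_of_sub_succ_le {a g : ℕ → ℝ} {L : ℝ} (ha : Tendsto a atTop (𝓝 L))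
    (hg : Tendsto g atTop (𝓝 0)) (h : ∀ n, a n - a (n + 1) ≤ g n - g (n + 1)) (n : ℕ) :
    a n - L ≤ g n := by
  have hmono : Monotone fun k => a k - g k := monotone_nat_of_le_succ fun k => by linarith [h k]
  linarith [hmono.ge_of_tendsto (by simpa using ha.sub hg) n]

theorem le_sub_of_tendsto_of_le_sub_succ {a g : ℕ → ℝ} {L : ℝ} (ha : Tendsto a atTop (𝓝 L))
    (hg : Tendsto g atTop (𝓝 0)) (h : ∀ n, g n - g (n + 1) ≤ a n - a (n + 1)) (n : ℕ) :
    g n ≤ a n - L := by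
  linarith [sub_le_of_tendsto_of_sub_succ_le (a := fun k => -a k) (g := fun k => -g k) ha.neg
    (by simpa using hg.neg) (fun k => by linarith [h k]) n]

theorem tendsto_log_stirlingSeq_succ :
    Tendsto (fun n => log (stirlingSeq (n + 1))) atTop (𝓝 (log √π)) :=
  ((continuousAt_log (sqrt_pos.2 pi_pos).ne').tendsto.comp tendsto_stirlingSeq_sqrt_pi).comp
    (tendsto_add_atTop_nat 1)

theorem tendsto_one_div_mul_succ (c : ℝ) :
    Tendsto (fun n : ℕ => 1 / (c * ((n : ℝ) + 1))) atTop (𝓝 0) := by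
  simpa [mul_inv, mul_comm] using (tendsto_one_div_add_atTop_nhds_zero_nat.const_mul c⁻¹)

-- The first term `1 / (3 (2n + 3)²)` of the series `log_stirlingSeq_sdiff_hasSum` suffices.
theorem one_div_fourteen_le_log_stirlingSeq_sdiff (n : ℕ) :
    1 / (14 * ((n : ℝ) + 1) * ((n : ℝ) + 2))
      ≤ log (stirlingSeq (n + 1)) - log (stirlingSeq (n + 2)) := by
  refine le_trans ?_ (le_hasSum (log_stirlingSeq_sdiff_hasSum n) 0 fun k _ => by positivity)
  have hn : (0 : ℝ) ≤ n := n.cast_nonneg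
  push_cast
  rw [pow_one, div_pow, one_pow, div_mul_div_comm, div_le_div_iff₀ (by positivity) (by positivity)]
  nlinarith

theorem log_stirlingSeq_succ_sub_log_sqrt_pi_le (n : ℕ) :
    log (stirlingSeq (n + 1)) - log √π ≤ 1 / (12 * ((n : ℝ) + 1)) := by
  refine sub_le_of_tendsto_of_sub_succ_le tendsto_log_stirlingSeq_succ
    (tendsto_one_div_mul_succ 12) (fun k => ?_) n
  have := log_stirlingSeq_sdiff_le (k + 1)
  push_cast at this ⊢
  convert this using 1
  field_simp
  ring

theorem one_div_fourteen_le_log_stirlingSeq_succ_sub_log_sqrt_pi (n : ℕ) :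
    1 / (14 * ((n : ℝ) + 1)) ≤ log (stirlingSeq (n + 1)) - log √π := by
  refine le_sub_of_tendsto_of_le_sub_succ tendsto_log_stirlingSeq_succ
    (tendsto_one_div_mul_succ 14) (fun k => ?_) n
  have := one_div_fourteen_le_log_stirlingSeq_sdiff k
  push_cast at this ⊢
  convert this using 1
  field_simp
  ring

theorem one_div_seven_lt_mul_exp_sub_one {M x : ℝ} (hM : 0 < M) (hx : 1 / (7 * M) ≤ x) :
    1 / 7 < M * (exp x - 1) := by
  have hx0 : 0 < x := lt_of_lt_of_le (by positivity) hx
  rw [div_le_iff₀ (by positivity)] at hx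
  nlinarith [add_one_lt_exp hx0.ne']

theorem mul_exp_sub_one_lt_one_div_five {M x : ℝ} (hM : 1 ≤ M) (hx : x ≤ 1 / (6 * M)) :
    M * (exp x - 1) < 1 / 5 := by
  have h6 : 0 < 6 * M - 1 := by linarith
  have hε : 1 / (6 * M) < 1 := by rw [div_lt_one (by positivity)]; linarith
  have hexp : exp x < 6 * M / (6 * M - 1) :=
    calc exp x ≤ exp (1 / (6 * M)) := exp_le_exp.2 hx
      _ < 1 / (1 - 1 / (6 * M)) := exp_bound_div_one_sub_of_interval' (by positivity) hε
      _ = 6 * M / (6 * M - 1) := by field_simp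
  calc M * (exp x - 1) < M * (6 * M / (6 * M - 1) - 1) := by gcongr
    _ = M / (6 * M - 1) := by rw [div_sub_one h6.ne']; ring
    _ ≤ 1 / 5 := by rw [div_le_div_iff₀ h6 (by norm_num)]; linarith

theorem factorial_eq_sqrt_mul_pow_mul_exp {n : ℕ} (hn : n ≠ 0) :
    (n ! : ℝ) = √(2 * π * (n + n * ((stirlingSeq n / √π) ^ 2 - 1))) * n ^ n * exp (-n) := by
  have hπ : 0 < π := pi_pos
  have hs : 2 * π * (n + n * ((stirlingSeq n / √π) ^ 2 - 1)) = (2 * n) * stirlingSeq n ^ 2 := by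
    rw [div_pow, sq_sqrt hπ.le]; field_simp; ring
  have hs0 : 0 ≤ stirlingSeq n := by unfold stirlingSeq; positivity
  rw [hs, sqrt_mul (by positivity), sqrt_sq hs0, stirlingSeq, exp_neg, ← exp_one_pow, div_pow]
  field_simp

theorem log_sq_stirlingSeq_succ_div_sqrt_pi_mem_Icc (n : ℕ) :
    log ((stirlingSeq (n + 1) / √π) ^ 2)
      ∈ Set.Icc (1 / (7 * ((n : ℝ) + 1))) (1 / (6 * ((n : ℝ) + 1))) := by
  rw [log_pow, log_div (stirlingSeq'_pos n).ne' (sqrt_pos.2 pi_pos).ne']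
  have hlo := one_div_fourteen_le_log_stirlingSeq_succ_sub_log_sqrt_pi n
  have hhi := log_stirlingSeq_succ_sub_log_sqrt_pi_le n
  have h7 : 1 / (7 * ((n : ℝ) + 1)) = 2 * (1 / (14 * ((n : ℝ) + 1))) := by field_simp; ring
  have h6 : 1 / (6 * ((n : ℝ) + 1)) = 2 * (1 / (12 * ((n : ℝ) + 1))) := by field_simp; ring
  push_cast
  constructor <;> linarith

/-- for every `m ≥ 0` there exists `η_m ∈ (1/7, 1/5)` such that
`m! = √(2π(m+η_m)) · m^m · e^{−m}` (with `0^0 = 1`). -/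
theorem stmt9 (m : ℕ) :
    ∃ η : ℝ, 1 / 7 < η ∧ η < 1 / 5 ∧
      (m.factorial : ℝ)
        = Real.sqrt (2 * Real.pi * ((m : ℝ) + η)) * (m : ℝ) ^ m * Real.exp (-(m : ℝ)) := by
  rcases m with _ | n
  · refine ⟨1 / (2 * π), ?_, ?_, ?_⟩
    · rw [div_lt_div_iff₀ (by norm_num) (by positivity)]; linarith [pi_lt_d2]
    · rw [div_lt_div_iff₀ (by positivity) (by norm_num)]; linarith [pi_gt_three]
    · field_simp; simp
  · set t := stirlingSeq (n + 1) / √π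
    have ht : 0 < t := div_pos (stirlingSeq'_pos n) (sqrt_pos.2 pi_pos)
    obtain ⟨hlo, hhi⟩ := log_sq_stirlingSeq_succ_div_sqrt_pi_mem_Icc n
    refine ⟨(n + 1 : ℕ) * (t ^ 2 - 1), ?_, ?_, factorial_eq_sqrt_mul_pow_mul_exp n.succ_ne_zero⟩
      <;> rw [← exp_log (pow_pos ht 2)]
    · exact one_div_seven_lt_mul_exp_sub_one (by positivity) (by push_cast; exact hlo)
    · exact mul_exp_sub_one_lt_one_div_five (by simp) (by push_cast; exact hhi)
end

section
/- Let X_1,...,X_M be independent binomial random variables, X_i ~ Bin(m_i, p_i) with p_i ∈ (0,1), let n = ∑m_i and k ∈ {1,...,n-1}, and let (c_1,...,c_M) ∈ (0,1)^M satisfy ((1-c_i)/c_i)(p_i/(1-p_i)) = ((1-c_j)/c_j)(p_j/(1-p_j)) for all i,j and ∑ c_i m_i = k. Then for every i and every positive integer r, P(|X_i - c_i m_i| ≥ Mr | ∑_j X_j = k) ≤ 2M e^{-(M-1)r²/n}. -/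
/-!
Conditioned on `∑ X_j = k`, the law of `(X_j)` is unchanged when every `p_j` is replaced by
`c_j`, because the odds ratios of `p_j` to `c_j` all agree; so we may take `p = c`. The mass of
`Bin(m_j, c_j)` increases towards `c_j m_j`: moving one unit from a coordinate lying `α` above
its centre to a coordinate lying below its centre multiplies the joint mass by at least
`1 + α / (c_u (1 - c_u) m_u)` (and symmetrically for the receiving coordinate). The deviations
`X_j - c_j m_j` sum to zero on the slice, so `|X_i - c_i m_i| ≥ M r` forces some `j ≠ i` to
deviate by `r` in the opposite direction. Transferring `r` units from the high to the low
coordinate is injective and gains `(1 + (M - 1) r / (c_i (1 - c_i) m_i))^r ≥ e^{(M-1) r² / n}`;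
a union bound over the `M - 1` partners and the two signs gives the factor `2M`.
-/

open Finset
open scoped BigOperators Classical

noncomputable section

/-- Probability mass function of a binomial random variable with parameters `m`, `p`. -/
def binomPMF (m : ℕ) (p : ℝ) (j : ℕ) : ℝ :=
  (m.choose j : ℝ) * p ^ j * (1 - p) ^ (m - j)

/-- Probability that independent binomials `X i ~ Bin(m i, p i)` realize an event `A`. -/
def jointPr {M : ℕ} (m : Fin M → ℕ) (p : Fin M → ℝ) (A : (Fin M → ℕ) → Prop) : ℝ :=
  ∑ ℓ ∈ Fintype.piFinset (fun i => Finset.range (m i + 1)),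
    if A ℓ then ∏ i, binomPMF (m i) (p i) (ℓ i) else 0

section Binomial

variable {m j q r : ℕ} {p c : ℝ}

lemma binomPMF_nonneg (hp₀ : 0 ≤ p) (hp₁ : p ≤ 1) : 0 ≤ binomPMF m p j := by
  have : 0 ≤ 1 - p := by linarith
  unfold binomPMF; positivity

lemma binomPMF_succ_mul (hj : j < m) (p : ℝ) :
    binomPMF m p (j + 1) * ((j + 1) * (1 - p)) = binomPMF m p j * ((m - j) * p) := by
  have hchoose : ((m.choose (j + 1) : ℕ) : ℝ) * (j + 1) = m.choose j * ((m : ℝ) - j) := by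
    rw [← Nat.cast_sub hj.le]; exact_mod_cast Nat.choose_succ_right_eq m j
  obtain ⟨d, rfl⟩ := Nat.exists_eq_add_of_lt hj
  simp only [binomPMF, show j + d + 1 - j = d + 1 by omega, show j + d + 1 - (j + 1) = d by omega]
  linear_combination p ^ (j + 1) * (1 - p) ^ (d + 1) * hchoose

lemma binomPMF_one_sub (hj : j ≤ m) (p : ℝ) : binomPMF m (1 - p) (m - j) = binomPMF m p j := by
  simp only [binomPMF, Nat.choose_symm hj, Nat.sub_sub_self hj, sub_sub_cancel]
  ring

lemma binomPMF_eq_pow_mul (hj : j ≤ m) (hp : p < 1) (hc₀ : 0 < c) (hc₁ : c < 1) :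
    binomPMF m p j =
      ((1 - p) / (1 - c)) ^ m * ((1 - c) / c * (p / (1 - p))) ^ j * binomPMF m c j := by
  have : 1 - p ≠ 0 := by linarith
  have : 1 - c ≠ 0 := by linarith
  obtain ⟨d, rfl⟩ := Nat.exists_eq_add_of_le hj
  simp only [binomPMF, Nat.add_sub_cancel_left, mul_pow, div_pow, pow_add]
  field_simp

lemma one_add_div_mul_binomPMF_le_pred {α : ℝ} (hc₀ : 0 < c) (hc₁ : c < 1) (hα : 0 ≤ α)
    (hq : c * m + α + 1 ≤ q) (hqm : q ≤ m) :
    (1 + α / (c * (1 - c) * m)) * binomPMF m c q ≤ binomPMF m c (q - 1) := by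
  have hq₁ : 1 ≤ q := by
    have : 0 ≤ c * m := by positivity
    exact_mod_cast (show (1 : ℝ) ≤ q by linarith)
  have hrec := binomPMF_succ_mul (show q - 1 < m by omega) c
  rw [Nat.sub_add_cancel hq₁, Nat.cast_sub hq₁, Nat.cast_one, sub_add_cancel] at hrec
  have hqm' : (q : ℝ) ≤ m := by exact_mod_cast hqm
  have hA : 0 < c * (1 - c) * m := by
    have : 0 < 1 - c := by linarith
    have : (0 : ℝ) < m := by exact_mod_cast (show 0 < m by omega)
    positivity
  have hY : 0 < ((m : ℝ) - (q - 1)) * c := by nlinarith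
  -- `b (q-1) / b q = q (1-c) / ((m-q+1) c)`, and `(m-q+1) c ≤ c (1-c) m` bounds the gain
  have hgain : α / (c * (1 - c) * m) * ((m - (q - 1)) * c) ≤ α := by
    calc α / (c * (1 - c) * m) * ((m - (q - 1)) * c)
        ≤ α / (c * (1 - c) * m) * (c * (1 - c) * m) := by
          refine mul_le_mul_of_nonneg_left ?_ (div_nonneg hα hA.le)
          nlinarith [mul_le_mul_of_nonneg_left (show c * m + 1 - q ≤ 0 by linarith) hc₀.le]
      _ = α := div_mul_cancel₀ _ hA.ne'
  refine le_of_mul_le_mul_right ?_ hY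
  calc (1 + α / (c * (1 - c) * m)) * binomPMF m c q * ((m - (q - 1)) * c)
      ≤ binomPMF m c q * (q * (1 - c)) := by
        rw [mul_comm _ (binomPMF m c q), mul_assoc]
        refine mul_le_mul_of_nonneg_left ?_ (binomPMF_nonneg hc₀.le hc₁.le)
        rw [add_mul, one_mul]
        linarith
    _ = binomPMF m c (q - 1) * ((m - (q - 1)) * c) := hrec

lemma one_add_div_pow_mul_binomPMF_le_sub {α : ℝ} (hc₀ : 0 < c) (hc₁ : c < 1) (hα : 0 ≤ α)
    (hq : c * m + α + r ≤ q) (hqm : q ≤ m) :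
    (1 + α / (c * (1 - c) * m)) ^ r * binomPMF m c q ≤ binomPMF m c (q - r) := by
  induction r with
  | zero => simp
  | succ r ih =>
    push_cast at hq
    calc (1 + α / (c * (1 - c) * m)) ^ (r + 1) * binomPMF m c q
        = (1 + α / (c * (1 - c) * m)) * ((1 + α / (c * (1 - c) * m)) ^ r * binomPMF m c q) := by
          ring
      _ ≤ (1 + α / (c * (1 - c) * m)) * binomPMF m c (q - r) := by
          have : 0 ≤ 1 - c := by linarith
          exact mul_le_mul_of_nonneg_left (ih (by linarith)) (by positivity)
      _ ≤ binomPMF m c (q - r - 1) := by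
          apply one_add_div_mul_binomPMF_le_pred hc₀ hc₁ hα _ (by omega)
          have : 0 ≤ c * m := by positivity
          have : (r : ℝ) ≤ q := by linarith
          rw [Nat.cast_sub (by exact_mod_cast this)]
          linarith

lemma one_add_div_pow_mul_binomPMF_le_add {β : ℝ} (hc₀ : 0 < c) (hc₁ : c < 1) (hβ : 0 ≤ β)
    (hq : q + r ≤ c * m - β) :
    (1 + β / (c * (1 - c) * m)) ^ r * binomPMF m c q ≤ binomPMF m c (q + r) := by
  have hqm : q + r ≤ m := by
    have : c * m ≤ m := by nlinarith [(Nat.cast_nonneg m : (0 : ℝ) ≤ m)]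
    exact_mod_cast (show ((q + r : ℕ) : ℝ) ≤ m by push_cast; linarith)
  have h := one_add_div_pow_mul_binomPMF_le_sub (m := m) (q := m - q) (r := r) (c := 1 - c)
    (by linarith) (by linarith) hβ (by rw [Nat.cast_sub (by omega)]; linarith) (Nat.sub_le _ _)
  rwa [sub_sub_cancel, mul_comm (1 - c) c, binomPMF_one_sub (by omega),
    Nat.sub_sub, binomPMF_one_sub hqm] at h

end Binomial

section Joint

abbrev jointSupport {M : ℕ} (m : Fin M → ℕ) : Finset (Fin M → ℕ) :=
  Fintype.piFinset fun i => range (m i + 1)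

def jointWeight {M : ℕ} (m : Fin M → ℕ) (p : Fin M → ℝ) (ℓ : Fin M → ℕ) : ℝ :=
  ∏ i, binomPMF (m i) (p i) (ℓ i)

variable {M : ℕ} {m : Fin M → ℕ} {p : Fin M → ℝ} {B B₁ B₂ : (Fin M → ℕ) → Prop}

lemma mem_jointSupport {ℓ : Fin M → ℕ} : ℓ ∈ jointSupport m ↔ ∀ i, ℓ i ≤ m i := by
  simp [Fintype.mem_piFinset]

lemma jointPr_eq_sum_ite (B : (Fin M → ℕ) → Prop) :
    jointPr m p B = ∑ ℓ ∈ jointSupport m, if B ℓ then jointWeight m p ℓ else 0 :=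
  rfl

lemma jointPr_eq_sum_filter (B : (Fin M → ℕ) → Prop) :
    jointPr m p B = ∑ ℓ ∈ (jointSupport m).filter B, jointWeight m p ℓ :=
  (sum_filter _ _).symm

lemma jointWeight_nonneg (hp₀ : ∀ i, 0 ≤ p i) (hp₁ : ∀ i, p i ≤ 1) (ℓ : Fin M → ℕ) :
    0 ≤ jointWeight m p ℓ :=
  prod_nonneg fun i _ => binomPMF_nonneg (hp₀ i) (hp₁ i)

lemma jointPr_nonneg (hp₀ : ∀ i, 0 ≤ p i) (hp₁ : ∀ i, p i ≤ 1) : 0 ≤ jointPr m p B := by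
  rw [jointPr_eq_sum_filter]
  exact sum_nonneg fun ℓ _ => jointWeight_nonneg hp₀ hp₁ ℓ

lemma jointPr_eq_zero (h : ∀ ℓ, (∀ i, ℓ i ≤ m i) → ¬ B ℓ) : jointPr m p B = 0 :=
  sum_eq_zero fun ℓ hℓ => if_neg (h ℓ (mem_jointSupport.1 hℓ))

lemma jointPr_le_add (hp₀ : ∀ i, 0 ≤ p i) (hp₁ : ∀ i, p i ≤ 1) (h : ∀ ℓ, B ℓ → B₁ ℓ ∨ B₂ ℓ) :
    jointPr m p B ≤ jointPr m p B₁ + jointPr m p B₂ := by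
  simp only [jointPr_eq_sum_ite, ← sum_add_distrib]
  refine sum_le_sum fun ℓ _ => ?_
  have := jointWeight_nonneg hp₀ hp₁ ℓ (m := m)
  by_cases hB : B ℓ
  · rcases h ℓ hB with h₁ | h₂ <;> split_ifs <;> simp_all
  · split_ifs <;> simp_all

lemma jointPr_le_sum {ι : Type*} {s : Finset ι} {B' : ι → (Fin M → ℕ) → Prop}
    (hp₀ : ∀ i, 0 ≤ p i) (hp₁ : ∀ i, p i ≤ 1) (h : ∀ ℓ, B ℓ → ∃ j ∈ s, B' j ℓ) :
    jointPr m p B ≤ ∑ j ∈ s, jointPr m p (B' j) := by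
  simp only [jointPr_eq_sum_ite]
  rw [sum_comm]
  refine sum_le_sum fun ℓ _ => ?_
  have hW := jointWeight_nonneg hp₀ hp₁ ℓ (m := m)
  have hnonneg : ∀ j ∈ s, 0 ≤ if B' j ℓ then jointWeight m p ℓ else 0 := fun j _ => by
    split_ifs <;> simp [hW]
  split_ifs with hB
  · obtain ⟨j, hj, hB'⟩ := h ℓ hB
    exact le_of_eq_of_le (if_pos hB').symm (single_le_sum hnonneg hj)
  · exact sum_nonneg hnonneg

lemma jointPr_eq_mul_jointPr_of_odds_eq {c : Fin M → ℝ} {ρ : ℝ} {k : ℕ} (hp : ∀ i, p i < 1)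
    (hc₀ : ∀ i, 0 < c i) (hc₁ : ∀ i, c i < 1) (hρ : ∀ i, (1 - c i) / c i * (p i / (1 - p i)) = ρ)
    (hB : ∀ ℓ, B ℓ → ∑ i, ℓ i = k) :
    jointPr m p B = (∏ i, ((1 - p i) / (1 - c i)) ^ m i) * ρ ^ k * jointPr m c B := by
  rw [jointPr, jointPr, mul_sum]
  refine sum_congr rfl fun ℓ hℓ => ?_
  split_ifs with h
  · rw [prod_congr rfl fun i _ => binomPMF_eq_pow_mul (mem_jointSupport.1 hℓ i) (hp i) (hc₀ i)
      (hc₁ i), prod_mul_distrib, prod_mul_distrib]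
    simp only [hρ, prod_pow_eq_pow_sum, hB ℓ h]
  · rw [mul_zero]

lemma prod_mul_jointWeight_le (hp₀ : ∀ i, 0 ≤ p i) (hp₁ : ∀ i, p i ≤ 1) {g : Fin M → ℝ}
    (hg : ∀ i, 0 ≤ g i) {ℓ ℓ' : Fin M → ℕ}
    (h : ∀ i, g i * binomPMF (m i) (p i) (ℓ i) ≤ binomPMF (m i) (p i) (ℓ' i)) :
    (∏ i, g i) * jointWeight m p ℓ ≤ jointWeight m p ℓ' := by
  rw [jointWeight, jointWeight, ← prod_mul_distrib]
  exact prod_le_prod (fun i _ => mul_nonneg (hg i) (binomPMF_nonneg (hp₀ i) (hp₁ i)))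
    fun i _ => h i

lemma mul_jointPr_le_of_injOn {B' : (Fin M → ℕ) → Prop} {G : ℝ} (f : (Fin M → ℕ) → Fin M → ℕ)
    (hp₀ : ∀ i, 0 ≤ p i) (hp₁ : ∀ i, p i ≤ 1) (hinj : Set.InjOn f {ℓ | B ℓ})
    (hf : ∀ ℓ, (∀ i, ℓ i ≤ m i) → B ℓ →
      (∀ i, f ℓ i ≤ m i) ∧ B' (f ℓ) ∧ G * jointWeight m p ℓ ≤ jointWeight m p (f ℓ)) :
    G * jointPr m p B ≤ jointPr m p B' := by
  have hf' : ∀ ℓ ∈ (jointSupport m).filter B, _ := fun ℓ hℓ =>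
    hf ℓ (mem_jointSupport.1 (mem_filter.1 hℓ).1) (mem_filter.1 hℓ).2
  rw [jointPr_eq_sum_filter, jointPr_eq_sum_filter, mul_sum]
  calc ∑ ℓ ∈ (jointSupport m).filter B, G * jointWeight m p ℓ
      ≤ ∑ ℓ ∈ (jointSupport m).filter B, jointWeight m p (f ℓ) :=
        sum_le_sum fun ℓ hℓ => (hf' ℓ hℓ).2.2
    _ = ∑ ℓ ∈ ((jointSupport m).filter B).image f, jointWeight m p ℓ :=
        (sum_image (hinj.mono fun ℓ hℓ => (mem_filter.1 hℓ).2)).symm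
    _ ≤ ∑ ℓ ∈ (jointSupport m).filter B', jointWeight m p ℓ :=
        sum_le_sum_of_subset_of_nonneg
          (image_subset_iff.2 fun ℓ hℓ =>
            mem_filter.2 ⟨mem_jointSupport.2 (hf' ℓ hℓ).1, (hf' ℓ hℓ).2.1⟩)
          fun ℓ _ _ => jointWeight_nonneg hp₀ hp₁ ℓ

end Joint

section Transfer

variable {M : ℕ} (u v : Fin M) (r : ℕ)

def transfer (ℓ : Fin M → ℕ) : Fin M → ℕ :=
  Function.update (Function.update ℓ u (ℓ u - r)) v (ℓ v + r)

variable {u v r} {ℓ : Fin M → ℕ}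

lemma transfer_apply_left (huv : u ≠ v) : transfer u v r ℓ u = ℓ u - r := by
  simp [transfer, Function.update_of_ne huv]

lemma transfer_apply_right : transfer u v r ℓ v = ℓ v + r := by
  simp [transfer]

lemma transfer_apply_of_ne {i : Fin M} (hu : i ≠ u) (hv : i ≠ v) : transfer u v r ℓ i = ℓ i := by
  simp [transfer, Function.update_of_ne hu, Function.update_of_ne hv]

lemma transfer_add_single (huv : u ≠ v) (hr : r ≤ ℓ u) :
    transfer u v r ℓ + Pi.single u r = ℓ + Pi.single v r := by
  ext i
  rcases eq_or_ne i u with rfl | hu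
  · simp [transfer_apply_left huv, huv, Nat.sub_add_cancel hr]
  rcases eq_or_ne i v with rfl | hv
  · simp [transfer_apply_right, hu]
  · simp [transfer_apply_of_ne hu hv, hu, hv]

lemma sum_transfer (huv : u ≠ v) (hr : r ≤ ℓ u) : ∑ i, transfer u v r ℓ i = ∑ i, ℓ i := by
  have h := congrArg (fun f : Fin M → ℕ => ∑ i, f i) (transfer_add_single huv hr)
  simpa [sum_add_distrib] using h

lemma transfer_injOn (huv : u ≠ v) : Set.InjOn (transfer u v r) {ℓ | r ≤ ℓ u} :=
  fun ℓ₁ h₁ ℓ₂ h₂ h => add_right_cancel <| by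
    rw [← transfer_add_single huv h₁, ← transfer_add_single huv h₂, h]

end Transfer

section Tail

variable {M : ℕ} {m : Fin M → ℕ} {c : Fin M → ℝ}

lemma pow_mul_pow_mul_jointPr_le (hc₀ : ∀ i, 0 < c i) (hc₁ : ∀ i, c i < 1) {u v : Fin M}
    (huv : u ≠ v) {α β : ℝ} (hα : 0 ≤ α) (hβ : 0 ≤ β) (r k : ℕ) :
    (1 + α / (c u * (1 - c u) * m u)) ^ r * (1 + β / (c v * (1 - c v) * m v)) ^ r *
        jointPr m c (fun ℓ => c u * m u + α + r ≤ ℓ u ∧ (ℓ v : ℝ) + r ≤ c v * m v - β ∧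
          ∑ i, ℓ i = k)
      ≤ jointPr m c (fun ℓ => ∑ i, ℓ i = k) := by
  have hu1c : 0 ≤ 1 - c u := by linarith [hc₁ u]
  have hv1c : 0 ≤ 1 - c v := by linarith [hc₁ v]
  have hu0 := (hc₀ u).le
  have hv0 := (hc₀ v).le
  set g : Fin M → ℝ := Pi.mulSingle u ((1 + α / (c u * (1 - c u) * m u)) ^ r) *
    Pi.mulSingle v ((1 + β / (c v * (1 - c v) * m v)) ^ r) with hg
  have hprod : ∏ i, g i =
      (1 + α / (c u * (1 - c u) * m u)) ^ r * (1 + β / (c v * (1 - c v) * m v)) ^ r := by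
    simp [hg, prod_mul_distrib]
  have hru : ∀ ℓ : Fin M → ℕ, c u * m u + α + r ≤ ℓ u → r ≤ ℓ u := fun ℓ hu => by
    have : (r : ℝ) ≤ ℓ u := by nlinarith [(Nat.cast_nonneg (m u) : (0 : ℝ) ≤ m u)]
    exact_mod_cast this
  rw [← hprod]
  refine mul_jointPr_le_of_injOn (transfer u v r) (fun i => (hc₀ i).le) (fun i => (hc₁ i).le)
    ((transfer_injOn huv).mono fun ℓ hℓ => hru ℓ hℓ.1) fun ℓ hℓ ⟨hu, hv, hsum⟩ => ⟨?_, ?_, ?_⟩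
  · have hrv : ℓ v + r ≤ m v := by
      have : ((ℓ v + r : ℕ) : ℝ) ≤ m v := by
        push_cast; nlinarith [(Nat.cast_nonneg (m v) : (0 : ℝ) ≤ m v)]
      exact_mod_cast this
    intro i
    rcases eq_or_ne i u with rfl | hiu
    · rw [transfer_apply_left huv]; exact (Nat.sub_le _ _).trans (hℓ _)
    rcases eq_or_ne i v with rfl | hiv
    · rwa [transfer_apply_right]
    · rw [transfer_apply_of_ne hiu hiv]; exact hℓ i
  · exact (sum_transfer huv (hru ℓ hu)).trans hsum
  · refine prod_mul_jointWeight_le (fun i => (hc₀ i).le) (fun i => (hc₁ i).le)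
      (fun i => ?_) fun i => ?_
    · simp only [hg, Pi.mul_apply, Pi.mulSingle_apply]
      split_ifs <;> positivity
    rcases eq_or_ne i u with rfl | hiu
    · simpa [hg, huv, transfer_apply_left huv] using
        one_add_div_pow_mul_binomPMF_le_sub (hc₀ i) (hc₁ i) hα hu (hℓ i)
    rcases eq_or_ne i v with rfl | hiv
    · simpa [hg, hiu, transfer_apply_right] using
        one_add_div_pow_mul_binomPMF_le_add (hc₀ i) (hc₁ i) hβ hv
    · simp [hg, hiu, hiv, transfer_apply_of_ne hiu hiv]

end Tail

section Conditioning

variable {M : ℕ} {m : Fin M → ℕ} {p c : Fin M → ℝ} {k : ℕ}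

lemma jointPr_div_jointPr_eq_of_odds_eq (hp₀ : ∀ j, 0 < p j) (hp₁ : ∀ j, p j < 1)
    (hc₀ : ∀ j, 0 < c j) (hc₁ : ∀ j, c j < 1) {i : Fin M}
    (hodds : ∀ j, (1 - c j) / c j * (p j / (1 - p j)) = (1 - c i) / c i * (p i / (1 - p i)))
    (A : (Fin M → ℕ) → Prop) :
    jointPr m p (fun ℓ => A ℓ ∧ ∑ j, ℓ j = k) / jointPr m p (fun ℓ => ∑ j, ℓ j = k) =
      jointPr m c (fun ℓ => A ℓ ∧ ∑ j, ℓ j = k) / jointPr m c (fun ℓ => ∑ j, ℓ j = k) := by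
  have hK : 0 < (∏ j, ((1 - p j) / (1 - c j)) ^ m j) * ((1 - c i) / c i * (p i / (1 - p i))) ^ k :=
    mul_pos (prod_pos fun j _ => pow_pos (div_pos (sub_pos.2 (hp₁ j)) (sub_pos.2 (hc₁ j))) _)
      (pow_pos (mul_pos (div_pos (sub_pos.2 (hc₁ i)) (hc₀ i))
        (div_pos (hp₀ i) (sub_pos.2 (hp₁ i)))) _)
  rw [jointPr_eq_mul_jointPr_of_odds_eq hp₁ hc₀ hc₁ hodds fun ℓ h => h.2,
    jointPr_eq_mul_jointPr_of_odds_eq hp₁ hc₀ hc₁ hodds fun ℓ h => h, mul_div_mul_left _ _ hK.ne']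

lemma sub_mul_eq_sum_erase {ℓ : Fin M → ℕ} (hsum : ∑ j, ℓ j = k) (hcs : ∑ j, c j * m j = k)
    (i : Fin M) : (ℓ i : ℝ) - c i * m i = ∑ j ∈ univ.erase i, (c j * m j - ℓ j) := by
  have hsum' : ∑ j, (ℓ j : ℝ) = k := by exact_mod_cast hsum
  rw [sum_sub_distrib, sum_erase_eq_sub (mem_univ i), sum_erase_eq_sub (mem_univ i), hcs, hsum']
  ring

lemma abs_natCast_sub_mul_le {x n : ℕ} {c : ℝ} (hc₀ : 0 ≤ c) (hc₁ : c ≤ 1) (hx : x ≤ n) :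
    |(x : ℝ) - c * n| ≤ n := by
  have : (x : ℝ) ≤ n := by exact_mod_cast hx
  have : (0 : ℝ) ≤ n := Nat.cast_nonneg n
  rw [abs_sub_le_iff]
  constructor <;> nlinarith

lemma abs_sub_mul_add_le_sum (hc₀ : ∀ j, 0 ≤ c j) (hc₁ : ∀ j, c j ≤ 1) {ℓ : Fin M → ℕ}
    (hℓ : ∀ j, ℓ j ≤ m j) (hsum : ∑ j, ℓ j = k) (hcs : ∑ j, c j * m j = k) (i : Fin M) :
    |(ℓ i : ℝ) - c i * m i| + m i ≤ ((∑ j, m j : ℕ) : ℝ) := by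
  rw [sub_mul_eq_sum_erase hsum hcs i, Nat.cast_sum, ← sum_erase_add _ _ (mem_univ i)]
  gcongr
  refine (abs_sum_le_sum_abs _ _).trans (sum_le_sum fun j _ => ?_)
  rw [abs_sub_comm]
  exact abs_natCast_sub_mul_le (hc₀ j) (hc₁ j) (hℓ j)

lemma jointPr_le_sum_tails (hc₀ : ∀ j, 0 < c j) (hc₁ : ∀ j, c j < 1)
    (hcs : ∑ j, c j * m j = k) (i : Fin M) {r : ℕ} (hr : 0 < r) :
    jointPr m c (fun ℓ => (M : ℝ) * r ≤ |(ℓ i : ℝ) - c i * m i| ∧ ∑ j, ℓ j = k) ≤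
      ∑ j ∈ univ.erase i,
        (jointPr m c (fun ℓ => c i * m i + (M - 1) * r + r ≤ ℓ i ∧ (ℓ j : ℝ) + r ≤ c j * m j ∧
            ∑ l, ℓ l = k) +
          jointPr m c (fun ℓ => c j * m j + r ≤ ℓ j ∧ (ℓ i : ℝ) + r ≤ c i * m i - (M - 1) * r ∧
            ∑ l, ℓ l = k)) := by
  have hc₀' := fun j => (hc₀ j).le
  have hc₁' := fun j => (hc₁ j).le
  refine (jointPr_le_sum hc₀' hc₁' fun ℓ ⟨hdev, hsum⟩ => ?_).trans
    (sum_le_sum fun j _ => jointPr_le_add hc₀' hc₁' fun ℓ h => h)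
  have hr' : (0 : ℝ) < r := by exact_mod_cast hr
  have hcard : ∑ _j ∈ univ.erase i, (r : ℝ) = (M - 1) * r := by
    rw [sum_const, card_erase_of_mem (mem_univ i), card_univ, Fintype.card_fin, nsmul_eq_mul,
      Nat.cast_pred i.pos]
  have hdev_eq := sub_mul_eq_sum_erase hsum hcs i
  rcases le_abs'.1 hdev with hlow | hup
  · obtain ⟨j, hj, hjr⟩ : ∃ j ∈ univ.erase i, (r : ℝ) < ℓ j - c j * m j := by
      refine exists_lt_of_sum_lt ?_
      rw [hcard, ← neg_neg (∑ j ∈ univ.erase i, ((ℓ j : ℝ) - c j * m j)), ← sum_neg_distrib]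
      simp only [neg_sub]
      linarith
    exact ⟨j, hj, Or.inr ⟨by linarith, by linarith, hsum⟩⟩
  · obtain ⟨j, hj, hjr⟩ : ∃ j ∈ univ.erase i, (r : ℝ) < c j * m j - ℓ j :=
      exists_lt_of_sum_lt (by linarith)
    exact ⟨j, hj, Or.inl ⟨by linarith, by linarith, hsum⟩⟩

end Conditioning

section Concentration

open Real

lemma exp_div_le_one_add_div {A a n : ℝ} (hA : 0 < A) (ha : 0 ≤ a) (hn : A + a ≤ n) :
    exp (a / n) ≤ 1 + a / A := by
  have hx : 0 < 1 + a / A := by positivity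
  have hlog : a / (A + a) = 1 - (1 + a / A)⁻¹ := by field_simp; ring
  calc exp (a / n) ≤ exp (a / (A + a)) :=
        exp_le_exp.2 (div_le_div_of_nonneg_left ha (by positivity) hn)
    _ ≤ exp (log (1 + a / A)) := exp_le_exp.2 (hlog ▸ one_sub_inv_le_log_of_pos hx)
    _ = 1 + a / A := exp_log hx

lemma le_exp_neg_mul_of_pow_mul_le {A a n T D : ℝ} (r : ℕ) (hA : 0 < A) (ha : 0 ≤ a)
    (hn : A + a ≤ n) (hT : 0 ≤ T) (h : (1 + a / A) ^ r * T ≤ D) :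
    T ≤ exp (-(a * r / n)) * D := by
  have hpow : exp (a * r / n) ≤ (1 + a / A) ^ r := by
    rw [mul_div_right_comm, mul_comm, exp_nat_mul]
    exact pow_le_pow_left₀ (exp_pos _).le (exp_div_le_one_add_div hA ha hn) r
  calc T = exp (-(a * r / n)) * (exp (a * r / n) * T) := by
        rw [← mul_assoc, ← exp_add, neg_add_cancel, exp_zero, one_mul]
    _ ≤ exp (-(a * r / n)) * D :=
        mul_le_mul_of_nonneg_left ((mul_le_mul_of_nonneg_right hpow hT).trans h) (exp_pos _).le

variable {M : ℕ} {m : Fin M → ℕ} {c : Fin M → ℝ} {i j : Fin M} {a n : ℝ}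

lemma jointPr_upper_tail_le (hc₀ : ∀ l, 0 < c l) (hc₁ : ∀ l, c l < 1) (hij : i ≠ j)
    (ha : 0 ≤ a) (hA : 0 < c i * (1 - c i) * m i) (hn : c i * (1 - c i) * m i + a ≤ n)
    (r k : ℕ) :
    jointPr m c (fun ℓ => c i * m i + a + r ≤ ℓ i ∧ (ℓ j : ℝ) + r ≤ c j * m j ∧ ∑ l, ℓ l = k) ≤
      exp (-(a * r / n)) * jointPr m c (fun ℓ => ∑ l, ℓ l = k) := by
  refine le_exp_neg_mul_of_pow_mul_le r hA ha hn
    (jointPr_nonneg (fun l => (hc₀ l).le) (fun l => (hc₁ l).le)) ?_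
  simpa using pow_mul_pow_mul_jointPr_le (m := m) hc₀ hc₁ hij ha le_rfl r k

lemma jointPr_lower_tail_le (hc₀ : ∀ l, 0 < c l) (hc₁ : ∀ l, c l < 1) (hij : i ≠ j)
    (ha : 0 ≤ a) (hA : 0 < c i * (1 - c i) * m i) (hn : c i * (1 - c i) * m i + a ≤ n)
    (r k : ℕ) :
    jointPr m c (fun ℓ => c j * m j + r ≤ ℓ j ∧ (ℓ i : ℝ) + r ≤ c i * m i - a ∧ ∑ l, ℓ l = k) ≤
      exp (-(a * r / n)) * jointPr m c (fun ℓ => ∑ l, ℓ l = k) := by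
  refine le_exp_neg_mul_of_pow_mul_le r hA ha hn
    (jointPr_nonneg (fun l => (hc₀ l).le) (fun l => (hc₁ l).le)) ?_
  simpa using pow_mul_pow_mul_jointPr_le (m := m) hc₀ hc₁ hij.symm le_rfl ha r k

lemma variance_pos_and_add_le_of_le_abs (hc₀ : ∀ l, 0 < c l) (hc₁ : ∀ l, c l < 1) {k r : ℕ}
    (hr : 0 < r) (hcs : ∑ l, c l * m l = k) {ℓ : Fin M → ℕ} (hℓ : ∀ l, ℓ l ≤ m l)
    (hsum : ∑ l, ℓ l = k) (hdev : (M : ℝ) * r ≤ |(ℓ i : ℝ) - c i * m i|) :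
    0 < c i * (1 - c i) * m i ∧ c i * (1 - c i) * m i + (M - 1) * r ≤ ((∑ l, m l : ℕ) : ℝ) := by
  have h₁ := abs_natCast_sub_mul_le (hc₀ i).le (hc₁ i).le (hℓ i)
  have h₂ := abs_sub_mul_add_le_sum (fun l => (hc₀ l).le) (fun l => (hc₁ l).le) hℓ hsum hcs i
  have hr' : (1 : ℝ) ≤ r := by exact_mod_cast hr
  have hM : (1 : ℝ) ≤ M := by exact_mod_cast i.pos
  have hci := hc₀ i
  have hci' := sub_pos.2 (hc₁ i)
  have hmi : (0 : ℝ) < m i := by nlinarith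
  have hvar : c i * (1 - c i) ≤ 1 := by nlinarith
  exact ⟨by positivity, by nlinarith⟩

lemma jointPr_deviation_le (hc₀ : ∀ l, 0 < c l) (hc₁ : ∀ l, c l < 1) {k r : ℕ}
    (hr : 0 < r) (hcs : ∑ l, c l * m l = k) (hA : 0 < c i * (1 - c i) * m i)
    (hn : c i * (1 - c i) * m i + (M - 1) * r ≤ ((∑ l, m l : ℕ) : ℝ)) :
    jointPr m c (fun ℓ => (M : ℝ) * r ≤ |(ℓ i : ℝ) - c i * m i| ∧ ∑ l, ℓ l = k) ≤
      2 * M * exp (-((M : ℝ) - 1) * r ^ 2 / ((∑ l, m l : ℕ) : ℝ)) *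
        jointPr m c (fun ℓ => ∑ l, ℓ l = k) := by
  have hM : (1 : ℝ) ≤ M := by exact_mod_cast i.pos
  have ha : (0 : ℝ) ≤ (M - 1) * r := by positivity
  have hD := jointPr_nonneg (m := m) (fun l => (hc₀ l).le) (fun l => (hc₁ l).le)
    (B := fun ℓ => ∑ l, ℓ l = k)
  refine (jointPr_le_sum_tails hc₀ hc₁ hcs i hr).trans <| (sum_le_sum fun j hj =>
    add_le_add (jointPr_upper_tail_le hc₀ hc₁ (ne_of_mem_erase hj).symm ha hA hn r k)
      (jointPr_lower_tail_le hc₀ hc₁ (ne_of_mem_erase hj).symm ha hA hn r k)).trans ?_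
  have hcard : ((univ.erase i).card : ℝ) ≤ M := by
    exact_mod_cast card_erase_le.trans_eq (card_fin M)
  rw [sum_const, nsmul_eq_mul, ← two_mul,
    show -((M : ℝ) - 1) * r ^ 2 / ((∑ l, m l : ℕ) : ℝ) =
      -((M - 1) * r * r / ((∑ l, m l : ℕ) : ℝ)) by ring]
  exact (mul_le_mul_of_nonneg_right hcard
    (mul_nonneg zero_le_two (mul_nonneg (exp_pos _).le hD))).trans_eq (by ring)

end Concentration

theorem stmt11_general {M : ℕ} (m : Fin M → ℕ) (p c : Fin M → ℝ)
    (hp : ∀ i, 0 < p i ∧ p i < 1) (hc : ∀ i, 0 < c i ∧ c i < 1)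
    (hsys : ∀ i j : Fin M,
      (1 - c i) / c i * (p i / (1 - p i)) = (1 - c j) / c j * (p j / (1 - p j)))
    (k : ℕ)
    (hcs : ∑ i, c i * (m i : ℝ) = (k : ℝ))
    (i : Fin M) (r : ℕ) (hr : 0 < r) :
    jointPr m p (fun ℓ => (M : ℝ) * r ≤ |(ℓ i : ℝ) - c i * (m i : ℝ)| ∧ ∑ j, ℓ j = k)
        / jointPr m p (fun ℓ => ∑ j, ℓ j = k)
      ≤ 2 * M * Real.exp (-((M : ℝ) - 1) * (r : ℝ) ^ 2 / ((∑ j, m j : ℕ) : ℝ)) := by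
  have hc₀ := fun j => (hc j).1
  have hc₁ := fun j => (hc j).2
  rw [jointPr_div_jointPr_eq_of_odds_eq (fun j => (hp j).1) (fun j => (hp j).2) hc₀ hc₁
    (fun j => hsys j i)]
  -- the exponential gain needs `c i (1 - c i) m i + (M - 1) r ≤ n`, which a nonempty event forces
  by_cases hne : ∃ ℓ : Fin M → ℕ,
      (∀ j, ℓ j ≤ m j) ∧ (M : ℝ) * r ≤ |(ℓ i : ℝ) - c i * m i| ∧ ∑ j, ℓ j = k
  · obtain ⟨ℓ, hℓ, hdev, hsum⟩ := hne
    obtain ⟨hA, hn⟩ := variance_pos_and_add_le_of_le_abs hc₀ hc₁ hr hcs hℓ hsum hdev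
    exact div_le_of_le_mul₀ (jointPr_nonneg (fun j => (hc₀ j).le) (fun j => (hc₁ j).le))
      (by positivity) (jointPr_deviation_le hc₀ hc₁ hr hcs hA hn)
  · rw [jointPr_eq_zero fun ℓ hℓ h => hne ⟨ℓ, hℓ, h⟩, zero_div]
    positivity

/-- concentration of the blocks around the centres `c i * m i` given
`∑ X_j = k`. -/
theorem stmt11 {M : ℕ} (m : Fin M → ℕ) (p c : Fin M → ℝ)
    (hp : ∀ i, 0 < p i ∧ p i < 1) (hc : ∀ i, 0 < c i ∧ c i < 1)
    (hsys : ∀ i j : Fin M,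
      (1 - c i) / c i * (p i / (1 - p i)) = (1 - c j) / c j * (p j / (1 - p j)))
    (k : ℕ) (hk1 : 1 ≤ k) (hk2 : k ≤ (∑ j, m j) - 1)
    (hcs : ∑ i, c i * (m i : ℝ) = (k : ℝ))
    (hpos : 0 < jointPr m p (fun ℓ => ∑ j, ℓ j = k))
    (i : Fin M) (r : ℕ) (hr : 0 < r) :
    jointPr m p (fun ℓ => (M : ℝ) * r ≤ |(ℓ i : ℝ) - c i * (m i : ℝ)| ∧ ∑ j, ℓ j = k)
        / jointPr m p (fun ℓ => ∑ j, ℓ j = k)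
      ≤ 2 * M * Real.exp (-((M : ℝ) - 1) * (r : ℝ) ^ 2 / ((∑ j, m j : ℕ) : ℝ)) :=
  stmt11_general m p c hp hc hsys k hcs i r hr
end
end

section
/- Let a, b > 0, c² = a² + b², let Φ be the standard normal distribution function, and for K ∈ ℝ define G(z) = Φ((c/(ab))·(z − a²K/c²)) − Φ(z/a). Then G attains its minimum over ℝ at z_min = K − (b/c)√(K² + c² log(c²/b²)), and the minimum value plus 1 equals Φ(bK/(ac) − R_K/a) + Φ(−K/a + bR_K/(ac)), where R_K = √(K² + c² log(c²/b²)); moreover this value lies strictly between 0 and 1. -/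
/-! `G' z = m φ(m (z - a²K/c²)) - a⁻¹ φ(z/a)` with `m = c/(ab)`, and twice the logarithm of the
ratio of these two terms is the quadratic `(z - z_min)(z_max - z) / b²`, `z_max = K + (b/c) R`.
Hence `G` decreases up to `z_min`, increases up to `z_max`, then decreases to its limit `0` at `+∞`.
Since `Φ(-x) = 1 - Φ(x)`, `G z_min + 1 = Φ(u) + Φ(v)`, which lies in `(0, 1)` because
`u + v = (b - c)(K + R)/(ac) < 0`; in particular `G z_min < 0`, the limit at `+∞`. -/

noncomputable section

/-- Standard normal distribution function. -/
def Phi (x : ℝ) : ℝ := ∫ t in Set.Iic x, Real.exp (-t ^ 2 / 2) / Real.sqrt (2 * Real.pi)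

open Real MeasureTheory Set Filter Topology

def phi (t : ℝ) : ℝ := exp (-t ^ 2 / 2) / √(2 * π)

lemma phi_pos (t : ℝ) : 0 < phi t := by unfold phi; positivity

lemma continuous_phi : Continuous phi := by unfold phi; fun_prop

lemma phi_neg (t : ℝ) : phi (-t) = phi t := by simp [phi]

lemma log_phi (t : ℝ) : log (phi t) = -t ^ 2 / 2 - log √(2 * π) := by
  rw [phi, log_div (exp_pos _).ne' (by positivity), log_exp]

lemma phi_eq_exp_div : phi = fun t => exp (-(1 / 2) * t ^ 2) / √(2 * π) := by
  ext t; rw [phi]; ring_nf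

lemma integrable_phi : Integrable phi := by
  rw [phi_eq_exp_div]
  exact (integrable_exp_neg_mul_sq (by norm_num)).div_const _

lemma integral_phi : ∫ t, phi t = 1 := by
  simp only [phi_eq_exp_div, integral_div, integral_gaussian]
  rw [show π / (1 / 2) = 2 * π by ring]
  exact div_self (by positivity)

lemma Phi_eq_setIntegral_phi (x : ℝ) : Phi x = ∫ t in Iic x, phi t := rfl

lemma Phi_sub_Phi (x y : ℝ) : Phi y - Phi x = ∫ t in x..y, phi t :=
  intervalIntegral.integral_Iic_sub_Iic integrable_phi.integrableOn integrable_phi.integrableOn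

lemma hasDerivAt_Phi (x : ℝ) : HasDerivAt Phi (phi x) x := by
  have h : HasDerivAt (fun y => Phi 0 + ∫ t in (0 : ℝ)..y, phi t) (phi x) x :=
    (intervalIntegral.integral_hasDerivAt_right integrable_phi.intervalIntegrable
      (continuous_phi.stronglyMeasurableAtFilter _ _) continuous_phi.continuousAt).const_add _
  convert h using 2 with y
  rw [← Phi_sub_Phi, add_sub_cancel]

lemma strictMono_Phi : StrictMono Phi := fun x y hxy => by
  rw [← sub_pos, Phi_sub_Phi]
  exact intervalIntegral.intervalIntegral_pos_of_pos integrable_phi.intervalIntegrable phi_pos hxy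

lemma Phi_pos (x : ℝ) : 0 < Phi x :=
  (setIntegral_nonneg measurableSet_Iic fun t _ => (phi_pos t).le).trans_lt
    (strictMono_Phi (sub_one_lt x))

lemma Phi_neg (x : ℝ) : Phi (-x) = 1 - Phi x := by
  have h : Phi x + ∫ t in Ioi x, phi t = 1 := by
    rw [Phi_eq_setIntegral_phi, intervalIntegral.integral_Iic_add_Ioi integrable_phi.integrableOn
      integrable_phi.integrableOn, integral_phi]
  rw [← h, add_sub_cancel_left, Phi_eq_setIntegral_phi, ← integral_comp_neg_Ioi]
  simp only [phi_neg]

lemma Phi_add_Phi_lt_one_iff {x y : ℝ} : Phi x + Phi y < 1 ↔ x + y < 0 := by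
  rw [← lt_sub_iff_add_lt, ← Phi_neg, strictMono_Phi.lt_iff_lt, ← lt_neg_iff_add_neg]

lemma tendsto_Phi_atTop : Tendsto Phi atTop (𝓝 1) := by
  have h := tendsto_setIntegral_of_monotone (μ := volume) (fun x : ℝ => measurableSet_Iic)
    (fun _ _ => Iic_subset_Iic.2) integrable_phi.integrableOn
  rwa [iUnion_Iic, setIntegral_univ, integral_phi] at h

lemma le_of_antitoneOn_monotoneOn_antitoneOn {f : ℝ → ℝ} {p q L : ℝ} (hpq : p ≤ q)
    (h₁ : AntitoneOn f (Iic p)) (h₂ : MonotoneOn f (Icc p q)) (h₃ : AntitoneOn f (Ici q))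
    (hf : Tendsto f atTop (𝓝 L)) (hpL : f p ≤ L) (z : ℝ) : f p ≤ f z := by
  rcases le_total z p with hzp | hpz
  · exact h₁ hzp (mem_Iic.2 le_rfl) hzp
  rcases le_total z q with hzq | hqz
  · exact h₂ ⟨le_rfl, hpq⟩ ⟨hpz, hzq⟩ hpz
  · refine hpL.trans (le_of_tendsto hf ?_)
    filter_upwards [eventually_ge_atTop z] with t hzt
    exact h₃ hqz (hqz.trans hzt) hzt

lemma le_of_hasDerivAt_sign_of_tendsto {f f' : ℝ → ℝ} {p q L : ℝ} (hpq : p ≤ q)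
    (hf : ∀ z, HasDerivAt f (f' z) z)
    (hneg : ∀ z, (z - p) * (q - z) ≤ 0 → f' z ≤ 0) (hpos : ∀ z, 0 ≤ (z - p) * (q - z) → 0 ≤ f' z)
    (hL : Tendsto f atTop (𝓝 L)) (hpL : f p ≤ L) (z : ℝ) : f p ≤ f z := by
  have hcont : Continuous f := continuous_iff_continuousAt.2 fun z => (hf z).continuousAt
  have hderiv (D : Set ℝ) (z : ℝ) : HasDerivWithinAt f (f' z) (interior D) z :=
    (hf z).hasDerivWithinAt
  refine le_of_antitoneOn_monotoneOn_antitoneOn hpq ?_ ?_ ?_ hL hpL z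
  · refine antitoneOn_of_hasDerivWithinAt_nonpos (convex_Iic p) hcont.continuousOn
      (fun z _ => hderiv _ z) fun z hz => hneg z ?_
    rw [interior_Iic, mem_Iio] at hz
    exact mul_nonpos_of_nonpos_of_nonneg (by linarith) (by linarith)
  · refine monotoneOn_of_hasDerivWithinAt_nonneg (convex_Icc p q) hcont.continuousOn
      (fun z _ => hderiv _ z) fun z hz => hpos z ?_
    rw [interior_Icc] at hz
    exact mul_nonneg (by linarith [hz.1]) (by linarith [hz.2])
  · refine antitoneOn_of_hasDerivWithinAt_nonpos (convex_Ici q) hcont.continuousOn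
      (fun z _ => hderiv _ z) fun z hz => hneg z ?_
    rw [interior_Ici, mem_Ioi] at hz
    exact mul_nonpos_of_nonneg_of_nonpos (by linarith) (by linarith)

lemma hasDerivAt_Phi_comp_sub_Phi_comp (m d a z : ℝ) :
    HasDerivAt (fun z => Phi (m * (z - d)) - Phi (z / a))
      (m * phi (m * (z - d)) - a⁻¹ * phi (z / a)) z := by
  have h₁ := (hasDerivAt_Phi _).comp z (((hasDerivAt_id z).sub_const d).const_mul m)
  have h₂ := (hasDerivAt_Phi _).comp z ((hasDerivAt_id z).div_const a)
  exact (h₁.sub h₂).congr_deriv (by simp only [id, mul_one, one_div]; ring)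

lemma tendsto_Phi_comp_sub_Phi_comp_atTop {m a : ℝ} (hm : 0 < m) (ha : 0 < a) (d : ℝ) :
    Tendsto (fun z => Phi (m * (z - d)) - Phi (z / a)) atTop (𝓝 0) := by
  have h₁ : Tendsto (fun z => m * (z - d)) atTop atTop :=
    (tendsto_atTop_add_const_right atTop (-d) tendsto_id).const_mul_atTop hm
  have h₂ : Tendsto (fun z => z / a) atTop atTop := tendsto_id.atTop_div_const ha
  simpa using (tendsto_Phi_atTop.comp h₁).sub (tendsto_Phi_atTop.comp h₂)

section
variable {a b c K R : ℝ}

lemma sq_sub_sq_add_log_eq (ha : a ≠ 0) (hb : b ≠ 0) (hc : c ≠ 0) (hc2 : c ^ 2 = a ^ 2 + b ^ 2)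
    (hR2 : R ^ 2 = K ^ 2 + c ^ 2 * log (c ^ 2 / b ^ 2)) (z : ℝ) :
    (z / a) ^ 2 - (c / (a * b) * (z - a ^ 2 * K / c ^ 2)) ^ 2 + log (c ^ 2 / b ^ 2)
      = (z - (K - b / c * R)) * (K + b / c * R - z) / b ^ 2 := by
  field_simp
  linear_combination (a ^ 2 * K ^ 2 - z ^ 2 * c ^ 2) * hc2 + (-(a ^ 2 * b ^ 2)) * hR2

lemma log_mul_phi_sub_log_mul_phi (ha : 0 < a) (hb : 0 < b) (hc : 0 < c) (x y : ℝ) :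
    log (c / (a * b) * phi x) - log (a⁻¹ * phi y) = (y ^ 2 - x ^ 2 + log (c ^ 2 / b ^ 2)) / 2 := by
  rw [log_mul (by positivity) (phi_pos x).ne', log_mul (by positivity) (phi_pos y).ne', log_phi,
    log_phi, log_div hc.ne' (by positivity), log_mul ha.ne' hb.ne', log_inv,
    log_div (by positivity) (by positivity), log_pow, log_pow]
  push_cast
  ring

lemma mul_phi_sub_inv_mul_phi_nonneg (ha : 0 < a) (hb : 0 < b) (hc : 0 < c)
    (hc2 : c ^ 2 = a ^ 2 + b ^ 2) (hR2 : R ^ 2 = K ^ 2 + c ^ 2 * log (c ^ 2 / b ^ 2)) (z : ℝ)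
    (hz : 0 ≤ (z - (K - b / c * R)) * (K + b / c * R - z)) :
    0 ≤ c / (a * b) * phi (c / (a * b) * (z - a ^ 2 * K / c ^ 2)) - a⁻¹ * phi (z / a) := by
  have hlog := log_mul_phi_sub_log_mul_phi ha hb hc (c / (a * b) * (z - a ^ 2 * K / c ^ 2)) (z / a)
  rw [sq_sub_sq_add_log_eq ha.ne' hb.ne' hc.ne' hc2 hR2] at hlog
  rw [sub_nonneg, ← log_le_log_iff (mul_pos (inv_pos.2 ha) (phi_pos _))
    (mul_pos (by positivity) (phi_pos _)), ← sub_nonneg, hlog]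
  positivity

lemma mul_phi_sub_inv_mul_phi_nonpos (ha : 0 < a) (hb : 0 < b) (hc : 0 < c)
    (hc2 : c ^ 2 = a ^ 2 + b ^ 2) (hR2 : R ^ 2 = K ^ 2 + c ^ 2 * log (c ^ 2 / b ^ 2)) (z : ℝ)
    (hz : (z - (K - b / c * R)) * (K + b / c * R - z) ≤ 0) :
    c / (a * b) * phi (c / (a * b) * (z - a ^ 2 * K / c ^ 2)) - a⁻¹ * phi (z / a) ≤ 0 := by
  have hlog := log_mul_phi_sub_log_mul_phi ha hb hc (c / (a * b) * (z - a ^ 2 * K / c ^ 2)) (z / a)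
  rw [sq_sub_sq_add_log_eq ha.ne' hb.ne' hc.ne' hc2 hR2] at hlog
  rw [sub_nonpos, ← log_le_log_iff (mul_pos (by positivity) (phi_pos _))
    (mul_pos (inv_pos.2 ha) (phi_pos _)), ← sub_nonpos, hlog]
  exact div_nonpos_of_nonpos_of_nonneg (div_nonpos_of_nonpos_of_nonneg hz (sq_nonneg b)) zero_le_two

lemma Phi_sub_Phi_add_one_eq_Phi_add_Phi (ha : a ≠ 0) (hb : b ≠ 0) (hc : c ≠ 0)
    (hc2 : c ^ 2 = a ^ 2 + b ^ 2) :
    Phi (c / (a * b) * (K - b / c * R - a ^ 2 * K / c ^ 2)) - Phi ((K - b / c * R) / a) + 1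
      = Phi (b * K / (a * c) - R / a) + Phi (-(K / a) + b * R / (a * c)) := by
  have h₁ : c / (a * b) * (K - b / c * R - a ^ 2 * K / c ^ 2) = b * K / (a * c) - R / a := by
    field_simp
    linear_combination K * hc2
  have h₂ : (K - b / c * R) / a = -(-(K / a) + b * R / (a * c)) := by
    field_simp
    ring
  rw [h₁, h₂, Phi_neg]
  ring

end

/-- with `c² = a² + b²` and
`G(z) = Φ((c/(ab))(z − a²K/c²)) − Φ(z/a)`, the function `G` attains its minimum at
`z_min = K − (b/c)√(K² + c² log(c²/b²))`, the minimum value plus 1 equals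
`Φ(bK/(ac) − R_K/a) + Φ(−K/a + bR_K/(ac))`, and this value is strictly between 0 and 1. -/
theorem stmt16 (a b K : ℝ) (ha : 0 < a) (hb : 0 < b) :
    let c := Real.sqrt (a ^ 2 + b ^ 2)
    let R := Real.sqrt (K ^ 2 + c ^ 2 * Real.log (c ^ 2 / b ^ 2))
    let G : ℝ → ℝ := fun z => Phi (c / (a * b) * (z - a ^ 2 * K / c ^ 2)) - Phi (z / a)
    let zmin := K - b / c * R
    (∀ z : ℝ, G zmin ≤ G z) ∧
    (G zmin + 1 = Phi (b * K / (a * c) - R / a) + Phi (-(K / a) + b * R / (a * c))) ∧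
    (0 < G zmin + 1 ∧ G zmin + 1 < 1) := by
  intro c R G zmin
  have hc : 0 < c := sqrt_pos.2 (by positivity)
  have hc2 : c ^ 2 = a ^ 2 + b ^ 2 := sq_sqrt (by positivity)
  have hbc : b < c := by nlinarith
  have hlog : 0 < log (c ^ 2 / b ^ 2) := log_pos ((one_lt_div (by positivity)).2 (by nlinarith))
  have hR2 : R ^ 2 = K ^ 2 + c ^ 2 * log (c ^ 2 / b ^ 2) := sq_sqrt (by positivity)
  have hR : 0 ≤ R := sqrt_nonneg _
  have hKR : 0 < K + R := by nlinarith [mul_pos (pow_pos hc 2) hlog]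
  have hvalue : G zmin + 1 = Phi (b * K / (a * c) - R / a) + Phi (-(K / a) + b * R / (a * c)) :=
    Phi_sub_Phi_add_one_eq_Phi_add_Phi ha.ne' hb.ne' hc.ne' hc2
  have hlt : G zmin + 1 < 1 := by
    rw [hvalue, Phi_add_Phi_lt_one_iff]
    have hsum : b * K / (a * c) - R / a + (-(K / a) + b * R / (a * c))
        = (b - c) * (K + R) / (a * c) := by
      field_simp
      ring
    rw [hsum]
    exact div_neg_of_neg_of_pos (mul_neg_of_neg_of_pos (by linarith) hKR) (by positivity)
  have hbR : 0 ≤ b / c * R := by positivity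
  have hroots : zmin ≤ K + b / c * R := (sub_le_self K hbR).trans (le_add_of_nonneg_right hbR)
  refine ⟨le_of_hasDerivAt_sign_of_tendsto hroots
    (fun z => hasDerivAt_Phi_comp_sub_Phi_comp _ _ _ z)
    (mul_phi_sub_inv_mul_phi_nonpos ha hb hc hc2 hR2)
    (mul_phi_sub_inv_mul_phi_nonneg ha hb hc hc2 hR2)
    (tendsto_Phi_comp_sub_Phi_comp_atTop (by positivity) ha _) (by linarith), hvalue, ?_, hlt⟩
  rw [hvalue]
  exact add_pos (Phi_pos _) (Phi_pos _)
end
end
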